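/- arXiv:2201.10832 — 4 statements merged into one kernel-verified Lean document; each statement's English description precedes it below -/
import Mathlib

section
/- Let C be a convex polyhedral cone in ℝ^{m+1} with nonempty interior and fix ν ∈ ℝ^{m+1}. For ξ' in the interior of the dual cone, define Vol(ξ') = (m+1)·Vol_{m+1}(Δ_{ξ'}) where Δ_{ξ'} = {p ∈ C : ⟨p,ξ'⟩ ≤ 1}. Then along the path ξ_t = ξ' + tν, the first derivative at t = 0 satisfies d/dt|_{t=0} Vol(ξ_t) = −(m+1)(m+2)·∫_{Δ_{ξ'}} ⟨p,ν⟩ dp. -/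
open MeasureTheory RealInnerProductSpace Set

private lemma stmt3_det_aux (n : ℕ) (φ : EuclideanSpace ℝ (Fin n) →L[ℝ] ℝ)
    (u : EuclideanSpace ℝ (Fin n)) :
    (ContinuousLinearMap.id ℝ (EuclideanSpace ℝ (Fin n)) + φ.smulRight u).det = 1 + φ u := by
  classical
  set b := PiLp.basisFun 2 ℝ (Fin n) with hb
  rw [ContinuousLinearMap.det, ← LinearMap.det_toMatrix b]
  have hmat : LinearMap.toMatrix b b ((ContinuousLinearMap.id ℝ (EuclideanSpace ℝ (Fin n)) + φ.smulRight u : EuclideanSpace ℝ (Fin n) →L[ℝ] EuclideanSpace ℝ (Fin n)) : EuclideanSpace ℝ (Fin n) →ₗ[ℝ] EuclideanSpace ℝ (Fin n))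
      = 1 + Matrix.replicateCol (Fin 1) u * Matrix.replicateRow (Fin 1) (fun j => φ (b j)) := by
    ext i j
    simp only [LinearMap.toMatrix_apply, ContinuousLinearMap.coe_add,
      LinearMap.add_apply, ContinuousLinearMap.coe_coe,
      ContinuousLinearMap.id_apply,
      ContinuousLinearMap.smulRight_apply, map_add, Matrix.add_apply, Matrix.mul_apply,
      Matrix.replicateCol_apply, Matrix.replicateRow_apply, Finset.univ_unique, Finset.sum_singleton,
      _root_.map_smul, Finsupp.add_apply, Finsupp.smul_apply]
    simp only [hb, PiLp.basisFun_repr, PiLp.basisFun_apply, smul_eq_mul]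
    rw [Matrix.one_apply]
    rcases eq_or_ne i j with h | h
    · subst h; simp [EuclideanSpace.single_apply]; ring
    · simp [EuclideanSpace.single_apply, h, Ne.symm h]; ring
  rw [hmat]
  erw [Matrix.det_one_add_replicateCol_mul_replicateRow]
  congr 1
  rw [dotProduct]
  have hcu : u = ∑ j, u j • b j := by
    have h2 := b.sum_repr u
    simp only [hb, PiLp.basisFun_repr] at h2
    exact h2.symm
  conv_rhs => rw [hcu]
  rw [map_sum]
  simp [smul_eq_mul, mul_comm]

/-- The derivative of the radial scaling map `y ↦ (1 + t⟪y,ν⟫)⁻¹ • y`. -/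
noncomputable def stmt3D (n : ℕ) (ν : EuclideanSpace ℝ (Fin n)) (t : ℝ)
    (x : EuclideanSpace ℝ (Fin n)) :
    EuclideanSpace ℝ (Fin n) →L[ℝ] EuclideanSpace ℝ (Fin n) :=
  (1 + t * ⟪x, ν⟫)⁻¹ • ContinuousLinearMap.id ℝ (EuclideanSpace ℝ (Fin n)) +
    ((-(((1 + t * ⟪x, ν⟫) ^ 2)⁻¹ * t)) • innerSL ℝ ν).smulRight x

private lemma stmt3_hasFDerivAt (n : ℕ) (ν x : EuclideanSpace ℝ (Fin n)) (t : ℝ)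
    (hs : 1 + t * ⟪x, ν⟫ ≠ 0) :
    HasFDerivAt (fun y : EuclideanSpace ℝ (Fin n) => (1 + t * ⟪y, ν⟫)⁻¹ • y)
      (stmt3D n ν t x) x := by
  have hc : HasFDerivAt (fun y : EuclideanSpace ℝ (Fin n) => 1 + t * ⟪y, ν⟫)
      (t • (innerSL ℝ ν : EuclideanSpace ℝ (Fin n) →L[ℝ] ℝ)) x := by
    have h1 : (fun y : EuclideanSpace ℝ (Fin n) => 1 + t * ⟪y, ν⟫)
        = fun y => 1 + t * (innerSL ℝ ν) y := by
      funext y; rw [innerSL_apply_apply, real_inner_comm]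
    rw [h1]
    have := (hasFDerivAt_const (1:ℝ) x).add (((innerSL ℝ ν).hasFDerivAt (x := x)).const_mul t)
    rwa [zero_add] at this
  have hinv := (hasFDerivAt_inv hs).comp x hc
  have hsm := hinv.smul (hasFDerivAt_id x)
  refine HasFDerivAt.congr_fderiv hsm (Eq.symm ?_)
  ext y i
  simp only [stmt3D, ContinuousLinearMap.add_apply, ContinuousLinearMap.smul_apply,
    ContinuousLinearMap.id_apply, ContinuousLinearMap.smulRight_apply,
    ContinuousLinearMap.coe_comp', Function.comp_apply, ContinuousLinearMap.coe_smul',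
    Pi.smul_apply, innerSL_apply_apply, ContinuousLinearMap.one_apply, ContinuousLinearMap.toSpanSingleton_apply, smul_eq_mul, id_eq,
    PiLp.add_apply, PiLp.smul_apply]
  ring

private lemma stmt3_det_val (n : ℕ) (ν x : EuclideanSpace ℝ (Fin n)) (t : ℝ)
    (hs : 1 + t * ⟪x, ν⟫ ≠ 0) :
    (stmt3D n ν t x).det = ((1 + t * ⟪x, ν⟫)⁻¹) ^ (n + 1) := by
  set a := ⟪x, ν⟫ with ha
  set s := 1 + t * a with hsdef
  have hD : stmt3D n ν t x
      = s⁻¹ • (ContinuousLinearMap.id ℝ (EuclideanSpace ℝ (Fin n))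
          + ((-(s⁻¹ * t)) • innerSL ℝ ν).smulRight x) := by
    ext y i
    simp only [stmt3D, ContinuousLinearMap.add_apply, ContinuousLinearMap.smul_apply,
      ContinuousLinearMap.id_apply, ContinuousLinearMap.smulRight_apply,
      ContinuousLinearMap.coe_smul', Pi.smul_apply, innerSL_apply_apply, smul_eq_mul,
      PiLp.add_apply, PiLp.smul_apply, ← ha]
    rw [hsdef]
    have h2 : (1 + t * a) ≠ 0 := hs
    field_simp
  rw [hD]
  have hcoe : ((s⁻¹ • (ContinuousLinearMap.id ℝ (EuclideanSpace ℝ (Fin n))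
          + ((-(s⁻¹ * t)) • innerSL ℝ ν).smulRight x) : EuclideanSpace ℝ (Fin n) →L[ℝ] EuclideanSpace ℝ (Fin n)) : EuclideanSpace ℝ (Fin n) →ₗ[ℝ] EuclideanSpace ℝ (Fin n))
      = s⁻¹ • ((ContinuousLinearMap.id ℝ (EuclideanSpace ℝ (Fin n))
          + ((-(s⁻¹ * t)) • innerSL ℝ ν).smulRight x : EuclideanSpace ℝ (Fin n) →L[ℝ] EuclideanSpace ℝ (Fin n)) : EuclideanSpace ℝ (Fin n) →ₗ[ℝ] EuclideanSpace ℝ (Fin n)) := rfl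
  rw [ContinuousLinearMap.det, hcoe, LinearMap.det_smul]
  have h2 := stmt3_det_aux n ((-(s⁻¹ * t)) • innerSL ℝ ν) x
  rw [ContinuousLinearMap.det] at h2
  rw [h2]
  have hfr : Module.finrank ℝ (EuclideanSpace ℝ (Fin n)) = n := finrank_euclideanSpace_fin
  rw [hfr]
  have hval : ((-(s⁻¹ * t)) • innerSL ℝ ν) x = -(s⁻¹ * t) * a := by
    rw [ha]; simp [real_inner_comm ν x]
  rw [hval]
  have h3 : 1 + -(s⁻¹ * t) * a = s⁻¹ := by
    field_simp
    rw [hsdef]; ring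
  rw [h3, pow_succ]

set_option maxHeartbeats 1000000 in
/-- first variation of the volume functional
`Vol(ξ) = (m+1)·Vol_{m+1}({p ∈ C : ⟪p,ξ⟫ ≤ 1})` along the path `ξ_t = ξ' + tν`:
`d/dt|_{t=0} Vol(ξ_t) = −(m+1)(m+2)·∫_{Δ_{ξ'}} ⟪p,ν⟫ dp`. -/
theorem stmt3 (m d : ℕ) (ℓ : Fin d → EuclideanSpace ℝ (Fin (m + 1)))
    (C : Set (EuclideanSpace ℝ (Fin (m + 1))))
    (hC : C = {p | ∀ a, 0 ≤ ⟪p, ℓ a⟫})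
    (hint : (interior C).Nonempty)
    (ξ' ν : EuclideanSpace ℝ (Fin (m + 1)))
    (hξ' : ∀ p ∈ C, p ≠ 0 → 0 < ⟪p, ξ'⟫) :
    deriv (fun t : ℝ => (m + 1 : ℝ) * (volume {p ∈ C | ⟪p, ξ' + t • ν⟫ ≤ 1}).toReal) 0
      = -((m + 1) * (m + 2) : ℝ) * ∫ p in {p ∈ C | ⟪p, ξ'⟫ ≤ 1}, ⟪p, ν⟫ ∂volume := by
  classical
  have hcont : ∀ w : EuclideanSpace ℝ (Fin (m+1)),
      Continuous fun p : EuclideanSpace ℝ (Fin (m+1)) => ⟪p, w⟫ := by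
    intro w
    exact Continuous.inner continuous_id continuous_const
  -- C is a closed cone
  have hCclosed : IsClosed C := by
    rw [hC]
    have h1 : {p : EuclideanSpace ℝ (Fin (m+1)) | ∀ a, 0 ≤ ⟪p, ℓ a⟫}
        = ⋂ a, {p | 0 ≤ ⟪p, ℓ a⟫} := by ext p; simp
    rw [h1]
    exact isClosed_iInter fun a =>
      isClosed_le continuous_const (hcont (ℓ a))
  have hcone : ∀ p ∈ C, ∀ r : ℝ, 0 ≤ r → r • p ∈ C := by
    intro p hp r hr
    rw [hC] at hp ⊢
    intro a
    rw [real_inner_smul_left]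
    exact mul_nonneg hr (hp a)
  -- a positive lower bound for ⟪·, ξ'⟫ on C
  obtain ⟨c, hcpos, hc⟩ : ∃ c : ℝ, 0 < c ∧ ∀ p ∈ C, c * ‖p‖ ≤ ⟪p, ξ'⟫ := by
    obtain ⟨x₀, hx₀⟩ := hint
    obtain ⟨ε, hε, hball⟩ := Metric.mem_nhds_iff.1 (mem_interior_iff_mem_nhds.1 hx₀)
    set e : EuclideanSpace ℝ (Fin (m+1)) := EuclideanSpace.single 0 1 with he
    have hne : ‖e‖ = 1 := by simp [he]
    have hz : ∃ z ∈ C, z ≠ 0 := by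
      have hm1 : x₀ + (ε/2) • e ∈ C := by
        apply hball
        simp only [Metric.mem_ball, dist_eq_norm, add_sub_cancel_left, norm_smul, hne,
          Real.norm_eq_abs, abs_of_pos (half_pos hε), mul_one]
        linarith
      have hm2 : x₀ - (ε/2) • e ∈ C := by
        apply hball
        simp only [Metric.mem_ball, dist_eq_norm, sub_sub_cancel_left, norm_neg, norm_smul, hne,
          Real.norm_eq_abs, abs_of_pos (half_pos hε), mul_one]
        linarith
      by_cases h0 : x₀ + (ε/2) • e = 0
      · refine ⟨x₀ - (ε/2) • e, hm2, fun h0' => ?_⟩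
        have hee : (ε:ℝ) • e = 0 := by
          have h3 : (x₀ + (ε/2) • e) - (x₀ - (ε/2) • e) = 0 := by rw [h0, h0', sub_zero]
          have h4 : (x₀ + (ε/2) • e) - (x₀ - (ε/2) • e) = (ε/2 + ε/2) • e := by
            rw [add_smul]; abel
          rw [h4] at h3
          rw [add_halves] at h3
          exact h3
        rcases smul_eq_zero.1 hee with h | h
        · linarith
        · rw [h] at hne; simp at hne
      · exact ⟨_, hm1, h0⟩
    obtain ⟨z, hzC, hz0⟩ := hz
    have hS : (C ∩ Metric.sphere 0 1).Nonempty := by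
      refine ⟨‖z‖⁻¹ • z, hcone z hzC _ (inv_nonneg.2 (norm_nonneg z)), ?_⟩
      simp only [Metric.mem_sphere, dist_zero_right, norm_smul, norm_inv, norm_norm]
      rw [inv_mul_cancel₀ (norm_ne_zero_iff.2 hz0)]
    have hScomp : IsCompact (C ∩ Metric.sphere 0 1) :=
      (isCompact_sphere (0:EuclideanSpace ℝ (Fin (m+1))) 1).inter_left hCclosed
    obtain ⟨u, huS, humin⟩ := hScomp.exists_isMinOn hS
      ((hcont ξ').continuousOn)
    have hu1 : ‖u‖ = 1 := by simpa using huS.2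
    have hu0 : u ≠ 0 := norm_ne_zero_iff.1 (by rw [hu1]; norm_num)
    refine ⟨⟪u, ξ'⟫, hξ' u huS.1 hu0, ?_⟩
    intro p hp
    rcases eq_or_ne p 0 with rfl | hp0
    · simp
    · have hpn : (0:ℝ) < ‖p‖ := norm_pos_iff.2 hp0
      have hu' : ‖p‖⁻¹ • p ∈ C ∩ Metric.sphere 0 1 := by
        refine ⟨hcone p hp _ (inv_nonneg.2 (norm_nonneg p)), ?_⟩
        simp only [Metric.mem_sphere, dist_zero_right, norm_smul, norm_inv, norm_norm]
        rw [inv_mul_cancel₀ (ne_of_gt hpn)]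
      have := humin hu'
      simp only [Set.mem_setOf_eq, id_eq, real_inner_smul_left] at this
      calc ⟪u, ξ'⟫ * ‖p‖ ≤ (‖p‖⁻¹ * ⟪p, ξ'⟫) * ‖p‖ := by
            exact mul_le_mul_of_nonneg_right this (norm_nonneg p)
        _ = ⟪p, ξ'⟫ := by field_simp
  -- the fixed simplex K
  set K : Set (EuclideanSpace ℝ (Fin (m+1))) := {p ∈ C | ⟪p, ξ'⟫ ≤ 1} with hK
  have hKclosed : IsClosed K :=
    hCclosed.inter (isClosed_le (hcont ξ') continuous_const)
  have hKnorm : ∀ p ∈ K, ‖p‖ ≤ c⁻¹ := by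
    intro p hp
    have h1 := hc p hp.1
    have h2 := hp.2
    have h3 : ‖p‖ ≤ 1 / c := by
      rw [le_div_iff₀ hcpos]
      nlinarith
    rwa [one_div] at h3
  have hKcomp : IsCompact K := by
    refine Metric.isCompact_of_isClosed_isBounded hKclosed ?_
    refine (Metric.isBounded_closedBall (x := (0:EuclideanSpace ℝ (Fin (m+1)))) (r := c⁻¹)).subset ?_
    intro p hp
    simpa [Metric.mem_closedBall, dist_zero_right] using hKnorm p hp
  have hKm : MeasurableSet K := hKclosed.measurableSet
  have hKfin : volume K < ⊤ := hKcomp.measure_lt_top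
  -- the smallness radius
  set δ : ℝ := c / (4 * (‖ν‖ + 1)) with hδdef
  have hδ : 0 < δ := by
    apply div_pos hcpos
    positivity
  have hδν : δ * ‖ν‖ ≤ c / 4 := by
    rw [hδdef]
    rw [div_mul_eq_mul_div, div_le_div_iff₀ (by positivity) (by norm_num)]
    nlinarith [norm_nonneg ν, hcpos.le]
  have hhalf : ∀ t : ℝ, |t| < δ → ∀ p : EuclideanSpace ℝ (Fin (m+1)), ‖p‖ ≤ 2 * c⁻¹ →
      |t * ⟪p, ν⟫| ≤ 1/2 := by
    intro t ht p hpn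
    have h1 : |⟪p, ν⟫| ≤ ‖p‖ * ‖ν‖ := abs_real_inner_le_norm p ν
    have h2 : |t * ⟪p, ν⟫| = |t| * |⟪p, ν⟫| := abs_mul _ _
    have h3 : (0:ℝ) < c⁻¹ := inv_pos.2 hcpos
    have h4 : δ * (2 * c⁻¹ * ‖ν‖) ≤ 1/2 := by
      have : δ * ‖ν‖ * (2 * c⁻¹) ≤ (c/4) * (2 * c⁻¹) := by
        apply mul_le_mul_of_nonneg_right hδν; positivity
      have hcc : (c/4) * (2 * c⁻¹) = 1/2 := by field_simp; ring
      nlinarith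
    nlinarith [abs_nonneg t, abs_nonneg (⟪p, ν⟫), norm_nonneg p, norm_nonneg ν,
      mul_le_mul ht.le h1 (abs_nonneg _) hδ.le]
  -- norm bound on the perturbed simplex
  have hKtnorm : ∀ t : ℝ, |t| < δ → ∀ q ∈ {p ∈ C | ⟪p, ξ' + t • ν⟫ ≤ 1},
      ‖q‖ ≤ 2 * c⁻¹ := by
    intro t ht q hq
    have h1 : c * ‖q‖ ≤ ⟪q, ξ'⟫ := hc q hq.1
    have h2 : ⟪q, ξ' + t • ν⟫ = ⟪q, ξ'⟫ + t * ⟪q, ν⟫ := by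
      rw [inner_add_right, real_inner_smul_right]
    have h3 := hq.2
    have h4 : |⟪q, ν⟫| ≤ ‖q‖ * ‖ν‖ := abs_real_inner_le_norm q ν
    have h5 : |t| * (‖q‖ * ‖ν‖) ≤ δ * ‖ν‖ * ‖q‖ := by
      rw [mul_comm (‖q‖) (‖ν‖), ← mul_assoc]
      apply mul_le_mul_of_nonneg_right _ (norm_nonneg q)
      exact mul_le_mul_of_nonneg_right ht.le (norm_nonneg ν)
    have h6 : δ * ‖ν‖ * ‖q‖ ≤ (c/4) * ‖q‖ :=
      mul_le_mul_of_nonneg_right hδν (norm_nonneg q)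
    have h7 : -(t * ⟪q, ν⟫) ≤ |t * ⟪q, ν⟫| := neg_le_abs _
    have h8 : |t * ⟪q, ν⟫| ≤ (c/4) * ‖q‖ := by
      rw [abs_mul]
      calc |t| * |⟪q, ν⟫| ≤ |t| * (‖q‖ * ‖ν‖) :=
            mul_le_mul_of_nonneg_left h4 (abs_nonneg t)
        _ ≤ δ * ‖ν‖ * ‖q‖ := h5
        _ ≤ (c/4) * ‖q‖ := h6
    have h9 : c * ‖q‖ ≤ 1 + (c/4) * ‖q‖ := by nlinarith
    have h10 : (3*c/4) * ‖q‖ ≤ 1 := by nlinarith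
    have h11 : ‖q‖ ≤ 2 / c := by
      rw [le_div_iff₀ hcpos]
      nlinarith
    rwa [div_eq_mul_inv] at h11
  -- the radial scaling map
  set Φ : ℝ → EuclideanSpace ℝ (Fin (m+1)) → EuclideanSpace ℝ (Fin (m+1)) :=
    fun t p => (1 + t * ⟪p, ν⟫)⁻¹ • p with hΦ
  have hc2 : (0:ℝ) < c⁻¹ := inv_pos.2 hcpos
  have hsK : ∀ t : ℝ, |t| < δ → ∀ p ∈ K, 1/2 ≤ 1 + t * ⟪p, ν⟫ := by
    intro t ht p hp
    have h1 := hhalf t ht p (le_trans (hKnorm p hp) (by linarith))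
    have h2 := (abs_le.1 h1).1
    linarith
  have himg : ∀ t : ℝ, |t| < δ →
      {p ∈ C | ⟪p, ξ' + t • ν⟫ ≤ 1} = Φ t '' K := by
    intro t ht
    ext q
    simp only [Set.mem_setOf_eq, Set.mem_image]
    constructor
    · rintro ⟨hq1, hq2⟩
      have hqn : ‖q‖ ≤ 2 * c⁻¹ := hKtnorm t ht q ⟨hq1, hq2⟩
      have hq3 : |t * ⟪q, ν⟫| ≤ 1/2 := hhalf t ht q hqn
      set r : ℝ := 1 - t * ⟪q, ν⟫ with hr
      have hrpos : 0 < r := by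
        have := (abs_le.1 hq3).2
        rw [hr]; linarith
      have hqsplit : ⟪q, ξ' + t • ν⟫ = ⟪q, ξ'⟫ + t * ⟪q, ν⟫ := by
        rw [inner_add_right, real_inner_smul_right]
      refine ⟨r⁻¹ • q, ⟨hcone q hq1 _ (inv_nonneg.2 hrpos.le), ?_⟩, ?_⟩
      · rw [real_inner_smul_left]
        have h7 : ⟪q, ξ'⟫ + t * ⟪q, ν⟫ ≤ 1 := by rw [← hqsplit]; exact hq2
        have h6 : ⟪q, ξ'⟫ ≤ r := by rw [hr]; linarith
        calc r⁻¹ * ⟪q, ξ'⟫ ≤ r⁻¹ * r := mul_le_mul_of_nonneg_left h6 (inv_nonneg.2 hrpos.le)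
          _ = 1 := inv_mul_cancel₀ (ne_of_gt hrpos)
      · show (1 + t * ⟪r⁻¹ • q, ν⟫)⁻¹ • (r⁻¹ • q) = q
        rw [real_inner_smul_left]
        have hrne := ne_of_gt hrpos
        have h5 : 1 + t * (r⁻¹ * ⟪q, ν⟫) = r⁻¹ := by
          have hkey : r + t * ⟪q, ν⟫ = 1 := by rw [hr]; ring
          have h5' : r * (1 + t * (r⁻¹ * ⟪q, ν⟫)) = r * r⁻¹ := by
            rw [mul_inv_cancel₀ hrne, mul_add, mul_one,
              show r * (t * (r⁻¹ * ⟪q, ν⟫)) = (r * r⁻¹) * (t * ⟪q, ν⟫) by ring,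
              mul_inv_cancel₀ hrne, one_mul]
            linarith
          exact mul_left_cancel₀ hrne h5'
        rw [h5, inv_inv, smul_smul, mul_inv_cancel₀ (ne_of_gt hrpos), one_smul]
    · rintro ⟨p, ⟨hp1, hp2⟩, rfl⟩
      have hs2 := hsK t ht p ⟨hp1, hp2⟩
      have hspos : (0:ℝ) < 1 + t * ⟪p, ν⟫ := by linarith
      constructor
      · exact hcone p hp1 _ (inv_nonneg.2 hspos.le)
      · show ⟪(1 + t * ⟪p, ν⟫)⁻¹ • p, ξ' + t • ν⟫ ≤ 1
        rw [real_inner_smul_left, inner_add_right, real_inner_smul_right]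
        have h6 : ⟪p, ξ'⟫ + t * ⟪p, ν⟫ ≤ 1 + t * ⟪p, ν⟫ := by linarith
        calc (1 + t * ⟪p, ν⟫)⁻¹ * (⟪p, ξ'⟫ + t * ⟪p, ν⟫)
            ≤ (1 + t * ⟪p, ν⟫)⁻¹ * (1 + t * ⟪p, ν⟫) :=
              mul_le_mul_of_nonneg_left h6 (inv_nonneg.2 hspos.le)
          _ = 1 := inv_mul_cancel₀ (ne_of_gt hspos)
  have hlinv : ∀ t : ℝ, |t| < δ → ∀ p ∈ K,
      (1 - t * ⟪Φ t p, ν⟫)⁻¹ • (Φ t p) = p := by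
    intro t ht p hp
    have hs2 := hsK t ht p hp
    have hspos : (0:ℝ) < 1 + t * ⟪p, ν⟫ := by linarith
    show (1 - t * ⟪(1 + t * ⟪p, ν⟫)⁻¹ • p, ν⟫)⁻¹ • ((1 + t * ⟪p, ν⟫)⁻¹ • p) = p
    rw [real_inner_smul_left]
    have hsne := ne_of_gt hspos
    have h5 : 1 - t * ((1 + t * ⟪p, ν⟫)⁻¹ * ⟪p, ν⟫) = (1 + t * ⟪p, ν⟫)⁻¹ := by
      have h5' : (1 + t * ⟪p, ν⟫) * (1 - t * ((1 + t * ⟪p, ν⟫)⁻¹ * ⟪p, ν⟫))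
          = (1 + t * ⟪p, ν⟫) * (1 + t * ⟪p, ν⟫)⁻¹ := by
        rw [mul_inv_cancel₀ hsne, mul_sub, mul_one,
          show (1 + t * ⟪p, ν⟫) * (t * ((1 + t * ⟪p, ν⟫)⁻¹ * ⟪p, ν⟫))
            = ((1 + t * ⟪p, ν⟫) * (1 + t * ⟪p, ν⟫)⁻¹) * (t * ⟪p, ν⟫) by ring,
          mul_inv_cancel₀ hsne, one_mul]
        ring
      exact mul_left_cancel₀ hsne h5'
    rw [h5, inv_inv, smul_smul, mul_inv_cancel₀ (ne_of_gt hspos), one_smul]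
  have hinj : ∀ t : ℝ, |t| < δ → Set.InjOn (Φ t) K := by
    intro t ht p1 h1 p2 h2 heq
    have := hlinv t ht p1 h1
    rw [heq, hlinv t ht p2 h2] at this
    exact this.symm
  -- change of variables
  have hvol : ∀ t : ℝ, |t| < δ →
      (volume {p ∈ C | ⟪p, ξ' + t • ν⟫ ≤ 1}).toReal
        = ∫ p in K, ((1 + t * ⟪p, ν⟫)⁻¹) ^ (m + 2) ∂volume := by
    intro t ht
    have hf' : ∀ p ∈ K, HasFDerivWithinAt (Φ t) (stmt3D (m+1) ν t p) K p := by
      intro p hp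
      have := stmt3_hasFDerivAt (m+1) ν p t (by linarith [hsK t ht p hp])
      exact this.hasFDerivWithinAt
    have hcov := integral_image_eq_integral_abs_det_fderiv_smul volume hKm hf'
      (hinj t ht) (fun _ => (1:ℝ))
    rw [himg t ht]
    rw [setIntegral_const] at hcov
    rw [smul_eq_mul, mul_one] at hcov
    rw [← measureReal_def, hcov]
    apply setIntegral_congr_fun hKm
    intro p hp
    have hspos : (0:ℝ) < 1 + t * ⟪p, ν⟫ := by linarith [hsK t ht p hp]
    show |(stmt3D (m+1) ν t p).det| • (1:ℝ) = ((1 + t * ⟪p, ν⟫)⁻¹) ^ (m + 2)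
    rw [stmt3_det_val (m+1) ν p t (ne_of_gt hspos), smul_eq_mul, mul_one,
      abs_of_nonneg (by positivity)]
  -- derivative of the parametrized integral
  have hFderiv : HasDerivAt
      (fun t : ℝ => ∫ p in K, ((1 + t * ⟪p, ν⟫)⁻¹) ^ (m + 2) ∂volume)
      (∫ p in K, -((m + 2 : ℝ)) * ⟪p, ν⟫ ∂volume) 0 := by
    have hmeas : ∀ t : ℝ, AEStronglyMeasurable
        (fun p : EuclideanSpace ℝ (Fin (m+1)) => ((1 + t * ⟪p, ν⟫)⁻¹) ^ (m + 2))
        (volume.restrict K) := by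
      intro t
      exact (((continuous_const.add (continuous_const.mul (hcont ν))).measurable).inv.pow_const
        (m+2)).aestronglyMeasurable
    have hmeas' : AEStronglyMeasurable
        (fun p : EuclideanSpace ℝ (Fin (m+1)) =>
          -((m + 2 : ℝ)) * ⟪p, ν⟫ * ((1 + (0:ℝ) * ⟪p, ν⟫)⁻¹) ^ (m + 3))
        (volume.restrict K) := by
      have mA := (hcont ν).measurable
      exact ((mA.const_mul (-((m:ℝ)+2))).mul
        ((measurable_const.add (mA.const_mul (0:ℝ))).inv.pow_const _)).aestronglyMeasurable
    have hint0 : Integrable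
        (fun p : EuclideanSpace ℝ (Fin (m+1)) => ((1 + (0:ℝ) * ⟪p, ν⟫)⁻¹) ^ (m + 2))
        (volume.restrict K) := by
      have : (fun p : EuclideanSpace ℝ (Fin (m+1)) => ((1 + (0:ℝ) * ⟪p, ν⟫)⁻¹) ^ (m + 2))
          = fun _ => (1:ℝ) := by
        funext p; simp
      rw [this]
      exact (integrableOn_const hKfin.ne)
    have hbound_int : Integrable
        (fun _ : EuclideanSpace ℝ (Fin (m+1)) =>
          ((m:ℝ) + 2) * (c⁻¹ * ‖ν‖) * 2 ^ (m + 3)) (volume.restrict K) :=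
      integrableOn_const hKfin.ne
    have hmain := hasDerivAt_integral_of_dominated_loc_of_deriv_le
      (μ := volume.restrict K) (x₀ := (0:ℝ)) (s := Metric.ball 0 δ)
      (F := fun t p => ((1 + t * ⟪p, ν⟫)⁻¹) ^ (m + 2))
      (F' := fun t p => -((m + 2 : ℝ)) * ⟪p, ν⟫ * ((1 + t * ⟪p, ν⟫)⁻¹) ^ (m + 3))
      (bound := fun _ => ((m:ℝ) + 2) * (c⁻¹ * ‖ν‖) * 2 ^ (m + 3))
      (Metric.ball_mem_nhds _ hδ) (Filter.Eventually.of_forall hmeas) hint0 hmeas' ?_ hbound_int ?_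
    · have h0 : (fun p : EuclideanSpace ℝ (Fin (m+1)) =>
          -((m + 2 : ℝ)) * ⟪p, ν⟫ * ((1 + (0:ℝ) * ⟪p, ν⟫)⁻¹) ^ (m + 3))
          = fun p => -((m + 2 : ℝ)) * ⟪p, ν⟫ := by
        funext p; simp
      rw [h0] at hmain
      exact hmain.2
    · -- bound
      apply (ae_restrict_iff' hKm).2
      apply Filter.Eventually.of_forall
      intro p hp t ht
      rw [Metric.mem_ball, Real.dist_eq, sub_zero] at ht
      have hs2 := hsK t ht p hp
      have hspos : (0:ℝ) < 1 + t * ⟪p, ν⟫ := by linarith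
      have hinv2 : (1 + t * ⟪p, ν⟫)⁻¹ ≤ 2 := by
        rw [inv_le_comm₀ hspos (by norm_num)]
        linarith
      have hinvpos : (0:ℝ) < (1 + t * ⟪p, ν⟫)⁻¹ := inv_pos.2 hspos
      have hpν : |⟪p, ν⟫| ≤ c⁻¹ * ‖ν‖ := by
        calc |⟪p, ν⟫| ≤ ‖p‖ * ‖ν‖ := abs_real_inner_le_norm p ν
          _ ≤ c⁻¹ * ‖ν‖ := mul_le_mul_of_nonneg_right (hKnorm p hp) (norm_nonneg ν)
      have hpow : ((1 + t * ⟪p, ν⟫)⁻¹) ^ (m + 3) ≤ 2 ^ (m + 3) :=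
        pow_le_pow_left₀ hinvpos.le hinv2 _
      rw [Real.norm_eq_abs, abs_mul, abs_mul]
      rw [abs_of_pos (pow_pos hinvpos _)]
      have h1 : |(-((m + 2 : ℝ)))| = (m:ℝ) + 2 := by
        rw [abs_neg, abs_of_pos] <;> positivity
      rw [h1]
      have h2 : ((m:ℝ) + 2) * |⟪p, ν⟫| ≤ ((m:ℝ) + 2) * (c⁻¹ * ‖ν‖) :=
        mul_le_mul_of_nonneg_left hpν (by positivity)
      calc ((m:ℝ) + 2) * |⟪p, ν⟫| * ((1 + t * ⟪p, ν⟫)⁻¹) ^ (m + 3)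
          ≤ (((m:ℝ) + 2) * (c⁻¹ * ‖ν‖)) * ((1 + t * ⟪p, ν⟫)⁻¹) ^ (m + 3) :=
            mul_le_mul_of_nonneg_right h2 (by positivity)
        _ ≤ (((m:ℝ) + 2) * (c⁻¹ * ‖ν‖)) * 2 ^ (m + 3) :=
            mul_le_mul_of_nonneg_left hpow (by positivity)
    · -- differentiability in t
      apply (ae_restrict_iff' hKm).2
      apply Filter.Eventually.of_forall
      intro p hp t ht
      rw [Metric.mem_ball, Real.dist_eq, sub_zero] at ht
      have hs2 := hsK t ht p hp
      have hspos : (0:ℝ) < 1 + t * ⟪p, ν⟫ := by linarith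
      have hsne := ne_of_gt hspos
      have hg : HasDerivAt (fun u : ℝ => 1 + u * ⟪p, ν⟫) (⟪p, ν⟫) t := by
        simpa using ((hasDerivAt_id t).mul_const (⟪p, ν⟫)).const_add (1:ℝ)
      have hinv := hg.inv hsne
      have hpow := hinv.pow (m + 2)
      refine HasDerivAt.congr_deriv hpow (Eq.symm ?_)
      rw [show m + 2 - 1 = m + 1 from rfl]
      rw [div_eq_mul_inv]
      rw [show ((1 + t * ⟪p, ν⟫) ^ 2)⁻¹ = ((1 + t * ⟪p, ν⟫)⁻¹) ^ 2 by
        rw [inv_pow]]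
      simp only [Pi.inv_apply]
      push_cast
      ring
  -- wrap up
  have heq : (fun t : ℝ => ((m:ℝ) + 1) * (volume {p ∈ C | ⟪p, ξ' + t • ν⟫ ≤ 1}).toReal)
      =ᶠ[nhds (0:ℝ)] fun t => ((m:ℝ) + 1) * ∫ p in K, ((1 + t * ⟪p, ν⟫)⁻¹) ^ (m + 2) ∂volume := by
    filter_upwards [Metric.ball_mem_nhds (0:ℝ) hδ] with t ht
    rw [hvol t (by rwa [Metric.mem_ball, Real.dist_eq, sub_zero] at ht)]
  rw [heq.deriv_eq]
  rw [(hFderiv.const_mul ((m:ℝ)+1)).deriv]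
  rw [integral_const_mul]
  ring
end

section
/- Let C be a convex polyhedral cone in ℝ^{m+1} with nonempty interior and fix ν ∈ ℝ^{m+1}. With Vol(ξ') = (m+1)·Vol_{m+1}({p ∈ C : ⟨p,ξ'⟩ ≤ 1}) and ξ_t = ξ' + tν, the second derivative at t = 0 satisfies d²/dt²|_{t=0} Vol(ξ_t) = (m+1)(m+2)(m+3)·∫_{Δ_{ξ'}} ⟨p,ν⟩² dp, where Δ_{ξ'} = {p ∈ C : ⟨p,ξ'⟩ ≤ 1}. In particular, the second derivative is nonnegative, so Vol is convex along lines within the interior of the dual cone. -/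
open MeasureTheory RealInnerProductSpace Set Real Pointwise
open scoped ENNReal NNReal Nat

namespace Stmt4Aux

variable {m : ℕ}

/-- Scaling a cone-slice. -/
lemma set_scale {C : Set (EuclideanSpace ℝ (Fin (m+1)))}
    (hcone : ∀ s : ℝ, 0 < s → ∀ p ∈ C, s • p ∈ C)
    (ξ : EuclideanSpace ℝ (Fin (m+1))) {s : ℝ} (hs : 0 < s) :
    {p ∈ C | ⟪p, ξ⟫ < s} = s • {p ∈ C | ⟪p, ξ⟫ < 1} := by
  ext p
  constructor
  · rintro ⟨hpC, hps⟩
    refine ⟨s⁻¹ • p, ⟨hcone s⁻¹ (by positivity) p hpC, ?_⟩, by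
      simp [smul_smul, mul_inv_cancel₀ hs.ne']⟩
    rw [real_inner_smul_left]
    rw [inv_mul_lt_iff₀ hs, mul_one]
    exact hps
  · rintro ⟨q, ⟨hqC, hq1⟩, rfl⟩
    refine ⟨hcone s hs q hqC, ?_⟩
    rw [real_inner_smul_left]
    calc s * ⟪q,ξ⟫ < s * 1 := by exact (mul_lt_mul_iff_right₀ hs).2 hq1
    _ = s := mul_one s

/-- Scaling of a lower Lebesgue integral over a dilated set. -/
lemma lint_smul_set (A : Set (EuclideanSpace ℝ (Fin (m+1)))) (hA : MeasurableSet A)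
    (g : EuclideanSpace ℝ (Fin (m+1)) → ℝ≥0∞)
    (hg : Measurable g) {s : ℝ} (hs : 0 < s) :
    ∫⁻ p in s • A, g p = ENNReal.ofReal (s ^ (m+1)) * ∫⁻ q in A, g (s • q) := by
  have hsA : MeasurableSet (s • A) := hA.const_smul₀ s
  have hmap := Measure.map_addHaar_smul (volume : Measure (EuclideanSpace ℝ (Fin (m+1)))) hs.ne'
  rw [finrank_euclideanSpace_fin] at hmap
  have key : ∫⁻ q, (s • A).indicator g (s • q) ∂volume
      = ENNReal.ofReal (abs ((s ^ (m+1))⁻¹)) * ∫⁻ p, (s • A).indicator g p ∂volume := by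
    rw [← lintegral_map (hg.indicator hsA) (measurable_const_smul s), hmap,
      lintegral_smul_measure, smul_eq_mul]
  have hpt : ∀ q, (s • A).indicator g (s • q) = A.indicator (fun q => g (s • q)) q := by
    intro q
    by_cases hq : q ∈ A
    · rw [indicator_of_mem hq, indicator_of_mem (smul_mem_smul_set hq)]
    · rw [indicator_of_notMem hq, indicator_of_notMem]
      rw [smul_mem_smul_set_iff₀ hs.ne']
      exact hq
  simp_rw [hpt] at key
  rw [← lintegral_indicator hsA, ← lintegral_indicator hA, key, ← mul_assoc,
    ← ENNReal.ofReal_mul (by positivity)]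
  rw [abs_of_nonneg (by positivity), mul_inv_cancel₀ (by positivity)]
  simp

lemma exp_layer (a : ℝ) :
    ∫⁻ s in Ioi a, ENNReal.ofReal (exp (-s)) = ENNReal.ofReal (exp (-a)) := by
  rw [← ofReal_integral_eq_lintegral_ofReal (by
        simpa [IntegrableOn] using exp_neg_integrableOn_Ioi a (b := 1) one_pos)
      (ae_of_all _ fun x => (exp_pos _).le), integral_exp_neg_Ioi]

lemma lint_gamma (q : ℕ) :
    ∫⁻ s in Ioi (0:ℝ), ENNReal.ofReal (exp (-s) * s ^ q) = ENNReal.ofReal (q ! : ℝ) := by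
  have h1 : ∀ s ∈ Ioi (0:ℝ), exp (-s) * s ^ ((q+1:ℝ) - 1) = exp (-s) * s ^ q := by
    intro s hs
    rw [add_sub_cancel_right, rpow_natCast]
  have h2 := Real.Gamma_eq_integral (s := q+1) (by positivity)
  rw [setIntegral_congr_fun measurableSet_Ioi h1] at h2
  have h3 : IntegrableOn (fun s : ℝ => exp (-s) * s ^ q) (Ioi 0) := by
    have := Real.GammaIntegral_convergent (s := q+1) (by positivity)
    exact (this.congr_fun h1 measurableSet_Ioi)
  rw [← ofReal_integral_eq_lintegral_ofReal h3 ((ae_restrict_iff' measurableSet_Ioi).2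
      (ae_of_all _ fun s hs => mul_nonneg (exp_pos _).le (pow_nonneg (mem_Ioi.1 hs).le _))), ← h2]
  congr 1
  exact_mod_cast Real.Gamma_nat_eq_factorial q


lemma lkey {C : Set (EuclideanSpace ℝ (Fin (m+1)))} (hmeas : MeasurableSet C)
    (hcone : ∀ s : ℝ, 0 < s → ∀ p ∈ C, s • p ∈ C)
    (ξ : EuclideanSpace ℝ (Fin (m+1))) (hpos : ∀ p ∈ C, 0 ≤ ⟪p, ξ⟫)
    (k : ℕ) (g : EuclideanSpace ℝ (Fin (m+1)) → ℝ≥0∞) (hg : Measurable g)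
    (hhom : ∀ s : ℝ, 0 < s → ∀ p, g (s • p) = ENNReal.ofReal (s ^ k) * g p) :
    ∫⁻ p in C, g p * ENNReal.ofReal (exp (-⟪p, ξ⟫))
      = ENNReal.ofReal (((m + 1 + k)! : ℕ) : ℝ) * ∫⁻ p in {p ∈ C | ⟪p, ξ⟫ < 1}, g p := by
  classical
  have hu : Continuous fun p : EuclideanSpace ℝ (Fin (m+1)) => ⟪p, ξ⟫ :=
    continuous_id.inner continuous_const
  set T : Set ((EuclideanSpace ℝ (Fin (m+1))) × ℝ) :=
    {q | q.1 ∈ C ∧ ⟪q.1, ξ⟫ < q.2} with hTdef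
  have hT : MeasurableSet T := by
    have h1 : MeasurableSet {q : (EuclideanSpace ℝ (Fin (m+1))) × ℝ | q.1 ∈ C} :=
      measurable_fst hmeas
    have h2 : MeasurableSet {q : (EuclideanSpace ℝ (Fin (m+1))) × ℝ | ⟪q.1, ξ⟫ < q.2} :=
      measurableSet_lt (hu.measurable.comp measurable_fst) measurable_snd
    exact h1.inter h2
  set Φ : (EuclideanSpace ℝ (Fin (m+1))) × ℝ → ℝ≥0∞ :=
    T.indicator (fun q => g q.1 * ENNReal.ofReal (exp (-q.2))) with hΦdef
  have hΦm : Measurable Φ := by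
    refine Measurable.indicator ?_ hT
    exact (hg.comp measurable_fst).mul
      (ENNReal.measurable_ofReal.comp ((continuous_exp.measurable).comp
        measurable_snd.neg))
  have hAs : ∀ s : ℝ, MeasurableSet {p ∈ C | ⟪p, ξ⟫ < s} := fun s =>
    hmeas.inter (measurableSet_lt hu.measurable measurable_const)
  set I : ℝ≥0∞ := ∫⁻ p in {p ∈ C | ⟪p, ξ⟫ < 1}, g p with hIdef
  have step1 : ∫⁻ p in C, g p * ENNReal.ofReal (exp (-⟪p, ξ⟫))
      = ∫⁻ p, ∫⁻ s, Φ (p, s) := by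
    rw [← lintegral_indicator hmeas]
    refine lintegral_congr fun p => ?_
    by_cases hp : p ∈ C
    · rw [indicator_of_mem hp]
      have hfun : ∀ s : ℝ, Φ (p, s)
          = (Ioi (⟪p, ξ⟫)).indicator (fun s => g p * ENNReal.ofReal (exp (-s))) s := by
        intro s
        rw [hΦdef, Set.indicator_apply, Set.indicator_apply]
        by_cases hs : ⟪p, ξ⟫ < s
        · rw [if_pos (show (p,s) ∈ T from ⟨hp, hs⟩), if_pos (mem_Ioi.2 hs)]
        · rw [if_neg (show (p,s) ∉ T from fun h => hs h.2), if_neg (by simpa using hs)]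
      have hm : Measurable fun a : ℝ => ENNReal.ofReal (rexp (-a)) := by fun_prop
      simp_rw [hfun]
      rw [lintegral_indicator measurableSet_Ioi, lintegral_const_mul _ hm, exp_layer]
    · rw [indicator_of_notMem hp]
      have : ∀ s : ℝ, Φ (p, s) = 0 := fun s =>
        indicator_of_notMem (fun h => hp h.1) _
      simp [this]
  have step2 : (∫⁻ p, ∫⁻ s, Φ (p, s)) = ∫⁻ s, ∫⁻ p, Φ (p, s) := by
    exact lintegral_lintegral_swap hΦm.aemeasurable
  have step3 : (∫⁻ s, ∫⁻ p, Φ (p, s))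
      = ∫⁻ s, (Ioi (0:ℝ)).indicator
          (fun s => ENNReal.ofReal (exp (-s) * s ^ (m + 1 + k)) * I) s := by
    refine lintegral_congr fun s => ?_
    by_cases hs : 0 < s
    · rw [indicator_of_mem (mem_Ioi.2 hs)]
      have hfun : ∀ p, Φ (p, s)
          = ({p ∈ C | ⟪p, ξ⟫ < s}).indicator (fun p => g p * ENNReal.ofReal (exp (-s))) p := by
        intro p
        rw [hΦdef, Set.indicator_apply, Set.indicator_apply]
        by_cases hp : p ∈ C ∧ ⟪p, ξ⟫ < s
        · rw [if_pos (show (p,s) ∈ T from hp),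
            if_pos (show p ∈ {p | p ∈ C ∧ ⟪p,ξ⟫ < s} from hp)]
        · rw [if_neg (show (p,s) ∉ T from hp),
            if_neg (show p ∉ {p | p ∈ C ∧ ⟪p,ξ⟫ < s} from hp)]
      simp_rw [hfun]
      rw [lintegral_indicator (hAs s), lintegral_mul_const _ hg,
        set_scale hcone ξ hs, lint_smul_set _ (hAs 1) g hg hs]
      have : ∀ q, g (s • q) = ENNReal.ofReal (s ^ k) * g q := hhom s hs
      simp_rw [this]
      rw [lintegral_const_mul _ hg]
      have hsplit : ENNReal.ofReal (rexp (-s) * s ^ (m+1+k))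
          = ENNReal.ofReal (rexp (-s)) * (ENNReal.ofReal (s^(m+1)) * ENNReal.ofReal (s^k)) := by
        rw [← ENNReal.ofReal_mul (pow_nonneg hs.le _), ← ENNReal.ofReal_mul (exp_pos _).le,
          pow_add]
      rw [← hIdef, hsplit]
      ring
    · rw [indicator_of_notMem (by simpa using hs)]
      have : ∀ p, Φ (p, s) = 0 := by
        intro p
        refine indicator_of_notMem (fun h => ?_) _
        exact absurd (lt_of_le_of_lt (hpos p h.1) h.2) hs
      simp [this]
  have step4 : (∫⁻ s, (Ioi (0:ℝ)).indicator
        (fun s => ENNReal.ofReal (exp (-s) * s ^ (m + 1 + k)) * I) s)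
      = ENNReal.ofReal (((m + 1 + k)! : ℕ) : ℝ) * I := by
    rw [lintegral_indicator measurableSet_Ioi, lintegral_mul_const, lint_gamma, mul_comm]
    exact ENNReal.measurable_ofReal.comp
      ((continuous_exp.comp continuous_neg).mul (continuous_pow _)).measurable
  rw [step1, step2, step3, step4]


lemma null_hyperplane (ξ : EuclideanSpace ℝ (Fin (m+1))) (hξ : ξ ≠ 0) (c : ℝ) :
    volume {p : EuclideanSpace ℝ (Fin (m+1)) | ⟪p, ξ⟫ = c} = 0 := by
  set K : Submodule ℝ (EuclideanSpace ℝ (Fin (m+1))) := LinearMap.ker (innerSL ℝ ξ : EuclideanSpace ℝ (Fin (m+1)) →ₗ[ℝ] ℝ) with hK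
  have hKne : K ≠ ⊤ := by
    intro h
    have : ξ ∈ K := h ▸ Submodule.mem_top
    rw [hK, LinearMap.mem_ker] at this
    simp only [ContinuousLinearMap.coe_coe, innerSL_apply_apply] at this
    exact hξ (inner_self_eq_zero.1 this)
  have hnorm : (‖ξ‖:ℝ)^2 ≠ 0 := pow_ne_zero 2 (norm_ne_zero_iff.2 hξ)
  set x₀ : EuclideanSpace ℝ (Fin (m+1)) := (c / ‖ξ‖^2) • ξ with hx₀
  have hset : {p : EuclideanSpace ℝ (Fin (m+1)) | ⟪p, ξ⟫ = c}
      = (fun p => p + (-x₀)) ⁻¹' (K : Set (EuclideanSpace ℝ (Fin (m+1)))) := by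
    ext p
    simp only [mem_setOf_eq, mem_preimage, SetLike.mem_coe, hK, LinearMap.mem_ker,
      ContinuousLinearMap.coe_coe, innerSL_apply_apply]
    rw [inner_add_right, inner_neg_right, hx₀, real_inner_smul_right]
    rw [real_inner_self_eq_norm_sq, div_mul_cancel₀ _ hnorm, real_inner_comm]
    constructor
    · intro h; rw [h]; ring
    · intro h; linarith
  rw [hset, measure_preimage_add_right]
  exact Measure.addHaar_submodule _ K hKne

lemma lt_ae_le {C : Set (EuclideanSpace ℝ (Fin (m+1)))}
    (ξ : EuclideanSpace ℝ (Fin (m+1))) (hξ : ξ ≠ 0) :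
    {p ∈ C | ⟪p, ξ⟫ < 1} =ᵐ[volume] {p ∈ C | ⟪p, ξ⟫ ≤ 1} := by
  rw [← measure_symmDiff_eq_zero_iff]
  refine measure_mono_null ?_ (null_hyperplane ξ hξ 1)
  intro p hp
  rcases hp with h | h
  · exact absurd (⟨h.1.1, h.1.2.le⟩ : p ∈ {p | p ∈ C ∧ ⟪p, ξ⟫ ≤ 1}) h.2
  · rcases lt_or_eq_of_le h.1.2 with h1 | h1
    · exact absurd (⟨h.1.1, h1⟩ : p ∈ {p | p ∈ C ∧ ⟪p, ξ⟫ < 1}) h.2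
    · exact h1

lemma bochner_eq {A : Set (EuclideanSpace ℝ (Fin (m+1)))} (hA : MeasurableSet A)
    {f : EuclideanSpace ℝ (Fin (m+1)) → ℝ} (hf : Continuous f) (hnn : ∀ p ∈ A, 0 ≤ f p) :
    ∫ p in A, f p = (∫⁻ p in A, ENNReal.ofReal (f p)).toReal := by
  exact integral_eq_lintegral_of_nonneg_ae ((ae_restrict_iff' hA).2 (ae_of_all _ hnn))
    hf.aestronglyMeasurable.restrict

lemma bochner_int {A : Set (EuclideanSpace ℝ (Fin (m+1)))} (hA : MeasurableSet A)
    {f : EuclideanSpace ℝ (Fin (m+1)) → ℝ} (hf : Continuous f) (hnn : ∀ p ∈ A, 0 ≤ f p)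
    (hfin : ∫⁻ p in A, ENNReal.ofReal (f p) < ⊤) : IntegrableOn f A := by
  refine ⟨hf.aestronglyMeasurable.restrict, ?_⟩
  rw [hasFiniteIntegral_iff_ofReal ((ae_restrict_iff' hA).2 (ae_of_all _ hnn))]
  exact hfin

end Stmt4Aux

set_option maxHeartbeats 2000000 in
open Stmt4Aux in
/-- second variation of `Vol(ξ) = (m+1)·Vol_{m+1}({p ∈ C : ⟪p,ξ⟫ ≤ 1})` along
`ξ_t = ξ' + tν`: `d²/dt²|_{t=0} Vol(ξ_t) = (m+1)(m+2)(m+3)·∫_{Δ_{ξ'}} ⟪p,ν⟫² dp`; in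
particular it is nonnegative, so `Vol` is convex along lines inside the interior of the dual
cone. -/
theorem stmt4 (m d : ℕ) (ℓ : Fin d → EuclideanSpace ℝ (Fin (m + 1)))
    (C : Set (EuclideanSpace ℝ (Fin (m + 1))))
    (hC : C = {p | ∀ a, 0 ≤ ⟪p, ℓ a⟫})
    (hint : (interior C).Nonempty)
    (ξ' ν : EuclideanSpace ℝ (Fin (m + 1)))
    (hξ' : ∀ p ∈ C, p ≠ 0 → 0 < ⟪p, ξ'⟫) :
    deriv (deriv (fun t : ℝ => (m + 1 : ℝ) * (volume {p ∈ C | ⟪p, ξ' + t • ν⟫ ≤ 1}).toReal)) 0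
        = ((m + 1) * (m + 2) * (m + 3) : ℝ) *
            ∫ p in {p ∈ C | ⟪p, ξ'⟫ ≤ 1}, ⟪p, ν⟫ ^ 2 ∂volume ∧
      0 ≤ deriv (deriv
        (fun t : ℝ => (m + 1 : ℝ) * (volume {p ∈ C | ⟪p, ξ' + t • ν⟫ ≤ 1}).toReal)) 0 := by
  classical
  -- basic structure of C
  have hclosed : IsClosed C := by
    rw [hC]
    have : {p : EuclideanSpace ℝ (Fin (m+1)) | ∀ a, 0 ≤ ⟪p, ℓ a⟫}
        = ⋂ a, {p | 0 ≤ ⟪p, ℓ a⟫} := by ext p; simp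
    rw [this]
    exact isClosed_iInter fun a =>
      isClosed_le continuous_const (continuous_id.inner continuous_const)
  have hmeas : MeasurableSet C := hclosed.measurableSet
  have hcone : ∀ s : ℝ, 0 < s → ∀ p ∈ C, s • p ∈ C := by
    intro s hs p hp
    rw [hC] at hp ⊢
    intro a
    rw [real_inner_smul_left]
    exact mul_nonneg hs.le (hp a)
  -- a nonzero point of C
  obtain ⟨p₀, hp₀C, hp₀⟩ : ∃ p₀ ∈ C, p₀ ≠ (0 : EuclideanSpace ℝ (Fin (m+1))) := by
    by_contra h
    push_neg at h
    obtain ⟨x, hx⟩ := hint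
    have hx0 : x = 0 := h x (interior_subset hx)
    rw [hx0] at hx
    obtain ⟨r, hr, hball⟩ := Metric.isOpen_iff.1 isOpen_interior 0 hx
    set y : EuclideanSpace ℝ (Fin (m+1)) := (r/2) • EuclideanSpace.single 0 1 with hy
    have hyn : ‖y‖ = r/2 := by
      rw [hy, norm_smul, EuclideanSpace.norm_single]
      rw [Real.norm_eq_abs, abs_div, abs_of_pos hr, norm_one, mul_one]
      norm_num
    have hymem : y ∈ Metric.ball (0 : EuclideanSpace ℝ (Fin (m+1))) r := by
      rw [Metric.mem_ball, dist_zero_right, hyn]; linarith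
    have : y = 0 := h y (interior_subset (hball hymem))
    rw [this, norm_zero] at hyn
    linarith
  -- uniform positivity
  obtain ⟨ε, hε, hεle⟩ : ∃ ε > (0:ℝ), ∀ p ∈ C, ε * ‖p‖ ≤ ⟪p, ξ'⟫ := by
    have hcont : Continuous fun p : EuclideanSpace ℝ (Fin (m+1)) => ⟪p, ξ'⟫ :=
      continuous_id.inner continuous_const
    set K := C ∩ Metric.sphere (0 : EuclideanSpace ℝ (Fin (m+1))) 1 with hK
    have hKc : IsCompact K := (isCompact_sphere _ _).inter_left hclosed
    have hq₀ : (‖p₀‖⁻¹ • p₀) ∈ K := by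
      constructor
      · exact hcone _ (inv_pos.2 (norm_pos_iff.2 hp₀)) _ hp₀C
      · rw [mem_sphere_zero_iff_norm, norm_smul, norm_inv, norm_norm,
          inv_mul_cancel₀ (norm_ne_zero_iff.2 hp₀)]
    obtain ⟨z, hzK, hzmin'⟩ := hKc.exists_isMinOn ⟨_, hq₀⟩ hcont.continuousOn
    have hzmin : ∀ y ∈ K, ⟪z, ξ'⟫ ≤ ⟪y, ξ'⟫ := fun y hy => hzmin' hy
    have hz1 : ‖z‖ = 1 := mem_sphere_zero_iff_norm.1 hzK.2
    have hzpos : 0 < ⟪z, ξ'⟫ := hξ' z hzK.1 (by intro h; rw [h, norm_zero] at hz1; linarith)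
    refine ⟨⟪z, ξ'⟫, hzpos, fun p hp => ?_⟩
    rcases eq_or_ne p 0 with rfl | hpne
    · simp
    · have hq : (‖p‖⁻¹ • p) ∈ K := by
        constructor
        · exact hcone _ (inv_pos.2 (norm_pos_iff.2 hpne)) _ hp
        · rw [mem_sphere_zero_iff_norm, norm_smul, norm_inv, norm_norm,
            inv_mul_cancel₀ (norm_ne_zero_iff.2 hpne)]
      have := hzmin _ hq
      rw [real_inner_smul_left] at this
      have hpn : (0:ℝ) < ‖p‖ := norm_pos_iff.2 hpne
      calc ⟪z, ξ'⟫ * ‖p‖ ≤ (‖p‖⁻¹ * ⟪p, ξ'⟫) * ‖p‖ :=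
        mul_le_mul_of_nonneg_right this hpn.le
      _ = ⟪p, ξ'⟫ := by field_simp
  set δ : ℝ := ε / (2 * (‖ν‖ + 1)) with hδdef
  have hδ : 0 < δ := by positivity
  set a : EuclideanSpace ℝ (Fin (m+1)) → ℝ := fun p => ⟪p, ξ'⟫ with ha
  set b : EuclideanSpace ℝ (Fin (m+1)) → ℝ := fun p => ⟪p, ν⟫ with hb
  have hip : ∀ (t : ℝ) p, ⟪p, ξ' + t • ν⟫ = a p + t * b p := by
    intro t p
    rw [inner_add_right, real_inner_smul_right, ha, hb]
  have hanneg : ∀ p ∈ C, 0 ≤ a p := fun p hp => le_trans (by positivity) (hεle p hp)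
  have hbound_ab : ∀ p ∈ C, |b p| ≤ ‖ν‖ / ε * a p := by
    intro p hp
    calc |b p| ≤ ‖p‖ * ‖ν‖ := abs_real_inner_le_norm p ν
    _ = ‖ν‖ * ‖p‖ := mul_comm _ _
    _ ≤ ‖ν‖ / ε * a p := by
        rw [div_mul_eq_mul_div, le_div_iff₀ hε]
        calc ‖ν‖ * ‖p‖ * ε = ‖ν‖ * (ε * ‖p‖) := by ring
        _ ≤ ‖ν‖ * a p := mul_le_mul_of_nonneg_left (hεle p hp) (norm_nonneg ν)
  have hhalf : ∀ t : ℝ, |t| ≤ δ → ∀ p ∈ C, 2⁻¹ * a p ≤ a p + t * b p := by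
    intro t ht p hp
    have h1 : |t * b p| ≤ δ * (‖ν‖ * ‖p‖) := by
      rw [abs_mul]
      exact mul_le_mul ht (abs_real_inner_le_norm p ν |>.trans_eq (mul_comm _ _))
        (abs_nonneg _) hδ.le
    have h2 : δ * (‖ν‖ * ‖p‖) ≤ (ε/2) * ‖p‖ := by
      rw [← mul_assoc]
      refine mul_le_mul_of_nonneg_right ?_ (norm_nonneg p)
      rw [hδdef, div_mul_eq_mul_div, div_le_div_iff₀ (by positivity) (by norm_num)]
      nlinarith [norm_nonneg ν]
    have h3 : (ε/2) * ‖p‖ ≤ 2⁻¹ * a p := by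
      have := hεle p hp
      nlinarith
    have := neg_abs_le (t * b p)
    nlinarith
  have hpos_t : ∀ t : ℝ, |t| ≤ δ → ∀ p ∈ C, 0 ≤ ⟪p, ξ' + t • ν⟫ := by
    intro t ht p hp
    rw [hip]
    have h1 := hhalf t ht p hp
    have h2 := hanneg p hp
    linarith
  have hξt_ne : ∀ t : ℝ, |t| ≤ δ → ξ' + t • ν ≠ 0 := by
    intro t ht h0
    have h1 := hhalf t ht p₀ hp₀C
    have h2 : ⟪p₀, ξ' + t • ν⟫ = 0 := by rw [h0, inner_zero_right]
    rw [hip] at h2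
    have h3 : ε * ‖p₀‖ ≤ a p₀ := hεle p₀ hp₀C
    have h4 : 0 < ‖p₀‖ := norm_pos_iff.2 hp₀
    nlinarith
  have hξ'ne : ξ' ≠ 0 := by
    have := hξt_ne 0 (by rw [abs_zero]; exact hδ.le)
    simpa using this
  have hac : Continuous a := continuous_id.inner continuous_const
  have hbc : Continuous b := continuous_id.inner continuous_const
  -- volume formula
  have hK0 : ∀ t : ℝ, |t| ≤ δ →
      (∫ p in C, exp (-(a p + t * b p)))
        = (((m+1)! : ℕ) : ℝ) * (volume {p ∈ C | ⟪p, ξ' + t • ν⟫ ≤ 1}).toReal := by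
    intro t ht
    have hcont : Continuous fun p => exp (-(a p + t * b p)) :=
      (continuous_exp.comp (hac.add (continuous_const.mul hbc)).neg)
    rw [bochner_eq hmeas hcont (fun p _ => (exp_pos _).le)]
    have hl := lkey hmeas hcone (ξ' + t • ν) (hpos_t t ht) 0
      (fun _ => (1:ℝ≥0∞)) measurable_const (by simp)
    simp only [one_mul] at hl
    have heq : ∀ p : EuclideanSpace ℝ (Fin (m+1)),
        ENNReal.ofReal (exp (-(a p + t * b p))) = ENNReal.ofReal (exp (-⟪p, ξ' + t • ν⟫)) := by
      intro p; rw [hip]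
    simp_rw [heq]
    rw [hl, setLIntegral_one, measure_congr (lt_ae_le _ (hξt_ne t ht)),
      ENNReal.toReal_mul, ENNReal.toReal_ofReal (by positivity)]
  -- second moment formula
  have hK2 : (∫ p in C, b p ^ 2 * exp (-(a p)))
      = (((m+3)! : ℕ) : ℝ) * ∫ p in {p ∈ C | ⟪p, ξ'⟫ ≤ 1}, ⟪p, ν⟫ ^ 2 ∂volume := by
    have hcont : Continuous fun p => b p ^ 2 * exp (-(a p)) :=
      (hbc.pow 2).mul (continuous_exp.comp hac.neg)
    rw [bochner_eq hmeas hcont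
      (fun p _ => mul_nonneg (sq_nonneg _) (exp_pos _).le)]
    have hg : Measurable fun p : EuclideanSpace ℝ (Fin (m+1)) => ENNReal.ofReal (b p ^ 2) :=
      ((hbc.pow 2).measurable).ennreal_ofReal
    have hhom : ∀ s : ℝ, 0 < s → ∀ p : EuclideanSpace ℝ (Fin (m+1)),
        ENNReal.ofReal (b (s • p) ^ 2) = ENNReal.ofReal (s ^ 2) * ENNReal.ofReal (b p ^ 2) := by
      intro s hs p
      rw [hb]
      simp only []
      rw [real_inner_smul_left, mul_pow, ENNReal.ofReal_mul (by positivity)]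
    have hl := lkey hmeas hcone ξ' hanneg 2
      (fun p => ENNReal.ofReal (b p ^ 2)) hg hhom
    have heq : ∀ p : EuclideanSpace ℝ (Fin (m+1)),
        ENNReal.ofReal (b p ^ 2 * exp (-(a p)))
          = ENNReal.ofReal (b p ^ 2) * ENNReal.ofReal (exp (-⟪p, ξ'⟫)) := by
      intro p
      rw [← ENNReal.ofReal_mul (sq_nonneg _)]
    simp_rw [heq]
    rw [hl, setLIntegral_congr (lt_ae_le _ hξ'ne)]
    have hmeas1 : MeasurableSet {p ∈ C | ⟪p, ξ'⟫ ≤ 1} :=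
      hmeas.inter (measurableSet_le hac.measurable measurable_const)
    rw [bochner_eq hmeas1 (f := fun p => b p ^ 2) (hbc.pow 2) (fun p _ => sq_nonneg _),
      ENNReal.toReal_mul, ENNReal.toReal_ofReal (by positivity)]
  -- integrable bounds
  have hDk : ∀ k : ℕ, IntegrableOn (fun p => a p ^ k * exp (-(2⁻¹ * a p))) C volume := by
    intro k
    have hξh : ∀ p ∈ C, 0 ≤ ⟪p, (2⁻¹:ℝ) • ξ'⟫ := by
      intro p hp
      rw [real_inner_smul_right]
      exact mul_nonneg (by norm_num) (hanneg p hp)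
    have hg : Measurable fun p : EuclideanSpace ℝ (Fin (m+1)) => ENNReal.ofReal (a p ^ k) :=
      ((hac.pow k).measurable).ennreal_ofReal
    have hhom : ∀ s : ℝ, 0 < s → ∀ p : EuclideanSpace ℝ (Fin (m+1)),
        ENNReal.ofReal (a (s • p) ^ k) = ENNReal.ofReal (s ^ k) * ENNReal.ofReal (a p ^ k) := by
      intro s hs p
      rw [ha]
      simp only []
      rw [real_inner_smul_left, mul_pow, ENNReal.ofReal_mul (by positivity)]
    have hl := lkey hmeas hcone ((2⁻¹:ℝ) • ξ') hξh k
      (fun p => ENNReal.ofReal (a p ^ k)) hg hhom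
    set S := {p ∈ C | ⟪p, (2⁻¹:ℝ) • ξ'⟫ < 1} with hS
    have hSsub : S ⊆ Metric.closedBall 0 (2/ε) := by
      intro p hp
      rw [Metric.mem_closedBall, dist_zero_right]
      have h1 : ⟪p, (2⁻¹:ℝ) • ξ'⟫ < 1 := hp.2
      rw [real_inner_smul_right] at h1
      have h2 := hεle p hp.1
      rw [le_div_iff₀ hε, mul_comm]
      linarith
    have hvolS : volume S < ⊤ :=
      lt_of_le_of_lt (measure_mono hSsub) measure_closedBall_lt_top
    have hbd : (∫⁻ p in S, ENNReal.ofReal (a p ^ k)) ≤ ENNReal.ofReal (2 ^ k) * volume S := by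
      have : (∫⁻ p in S, ENNReal.ofReal (a p ^ k))
          ≤ ∫⁻ _ in S, ENNReal.ofReal (2 ^ k) := by
        refine setLIntegral_mono measurable_const fun p hp => ?_
        refine ENNReal.ofReal_le_ofReal (pow_le_pow_left₀ (hanneg p hp.1) ?_ k)
        have h1 : ⟪p, (2⁻¹:ℝ) • ξ'⟫ < 1 := hp.2
        rw [real_inner_smul_right] at h1
        linarith
      simpa [lintegral_const, Measure.restrict_apply] using this
    have hfin : (∫⁻ p in C, ENNReal.ofReal (a p ^ k)
        * ENNReal.ofReal (exp (-⟪p, (2⁻¹:ℝ) • ξ'⟫))) < ⊤ := by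
      rw [hl]
      exact ENNReal.mul_lt_top ENNReal.ofReal_lt_top
        (lt_of_le_of_lt hbd (ENNReal.mul_lt_top ENNReal.ofReal_lt_top hvolS))
    have hcont : Continuous fun p => a p ^ k * exp (-(2⁻¹ * a p)) :=
      (hac.pow k).mul (continuous_exp.comp (continuous_const.mul hac).neg)
    refine bochner_int hmeas hcont
      (fun p hp => mul_nonneg (pow_nonneg (hanneg p hp) k) (exp_pos _).le) ?_
    have heq : (∫⁻ p in C, ENNReal.ofReal (a p ^ k * exp (-(2⁻¹ * a p))))
        = ∫⁻ p in C, ENNReal.ofReal (a p ^ k)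
            * ENNReal.ofReal (exp (-⟪p, (2⁻¹:ℝ) • ξ'⟫)) := by
      refine setLIntegral_congr_fun hmeas (fun p hp => ?_)
      rw [← ENNReal.ofReal_mul (pow_nonneg (hanneg p hp) k), real_inner_smul_right]
    rw [heq]
    exact hfin
  -- pointwise derivatives
  have hder : ∀ (p : EuclideanSpace ℝ (Fin (m+1))) (x : ℝ),
      HasDerivAt (fun x : ℝ => exp (-(a p + x * b p)))
        (-(b p) * exp (-(a p + x * b p))) x := by
    intro p x
    have h1 : HasDerivAt (fun x : ℝ => -(a p + x * b p)) (-(b p)) x :=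
      ((hasDerivAt_mul_const (b p)).const_add (a p)).neg
    have h2 := h1.exp
    convert h2 using 1
    ring
  have hder2 : ∀ (p : EuclideanSpace ℝ (Fin (m+1))) (x : ℝ),
      HasDerivAt (fun x : ℝ => -(b p) * exp (-(a p + x * b p)))
        (b p ^ 2 * exp (-(a p + x * b p))) x := by
    intro p x
    have h2 := (hder p x).const_mul (-(b p))
    rw [show b p ^ 2 * exp (-(a p + x * b p)) = -(b p) * (-(b p) * exp (-(a p + x * b p))) by ring]
    exact h2
  have hballabs : ∀ t₀ : ℝ, |t₀| < δ → ∀ x ∈ Metric.ball t₀ (δ - |t₀|), |x| ≤ δ := by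
    intro t₀ ht₀ x hx
    rw [Metric.mem_ball, Real.dist_eq] at hx
    have := abs_sub_abs_le_abs_sub x t₀
    linarith
  -- first derivative
  have hderΦ : ∀ t₀ : ℝ, |t₀| < δ →
      Integrable (fun p => -(b p) * exp (-(a p + t₀ * b p))) (volume.restrict C) ∧
      HasDerivAt (fun t => ∫ p in C, exp (-(a p + t * b p)))
        (∫ p in C, -(b p) * exp (-(a p + t₀ * b p))) t₀ := by
    intro t₀ ht₀
    have hrpos : 0 < δ - |t₀| := by linarith
    have hcF : ∀ x : ℝ, Continuous fun p => exp (-(a p + x * b p)) := fun x =>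
      continuous_exp.comp (hac.add (continuous_const.mul hbc)).neg
    have hcF' : ∀ x : ℝ, Continuous fun p => -(b p) * exp (-(a p + x * b p)) := fun x =>
      hbc.neg.mul (hcF x)
    refine hasDerivAt_integral_of_dominated_loc_of_deriv_le (𝕜 := ℝ)
      (μ := (volume : Measure (EuclideanSpace ℝ (Fin (m+1)))).restrict C)
      (F := fun t p => exp (-(a p + t * b p)))
      (F' := fun t p => -(b p) * exp (-(a p + t * b p)))
      (x₀ := t₀)
      (bound := fun p => ‖ν‖ / ε * (a p * exp (-(2⁻¹ * a p))))
      (Metric.ball_mem_nhds t₀ hrpos)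
      (Filter.Eventually.of_forall fun x => (hcF x).aestronglyMeasurable.restrict)
      ?_ ((hcF' t₀).aestronglyMeasurable.restrict) ?_ ?_ ?_
    · -- Integrable (F t₀)
      refine Integrable.mono (hDk 0) ((hcF t₀).aestronglyMeasurable.restrict)
        ((ae_restrict_iff' hmeas).2 (ae_of_all _ fun p hp => ?_))
      rw [Real.norm_eq_abs, Real.norm_eq_abs, abs_of_pos (exp_pos _), pow_zero, one_mul,
        abs_of_pos (exp_pos _)]
      exact exp_le_exp.2 (by have := hhalf t₀ ht₀.le p hp; linarith)
    · -- bound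
      refine (ae_restrict_iff' hmeas).2 (ae_of_all _ fun p hp => fun x hx => ?_)
      rw [Real.norm_eq_abs, abs_mul, abs_neg, abs_of_pos (exp_pos _)]
      calc |b p| * exp (-(a p + x * b p))
          ≤ (‖ν‖ / ε * a p) * exp (-(2⁻¹ * a p)) := by
            refine mul_le_mul (hbound_ab p hp) (exp_le_exp.2 ?_) (exp_pos _).le ?_
            · have := hhalf x (hballabs t₀ ht₀ x hx) p hp; linarith
            · have := hanneg p hp; positivity
      _ = ‖ν‖ / ε * (a p * exp (-(2⁻¹ * a p))) := by ring
    · -- bound integrable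
      have := (hDk 1).const_mul (‖ν‖ / ε)
      simpa [pow_one] using this
    · -- differentiability
      exact ae_of_all _ fun p x _ => hder p x
  -- second derivative
  have hderΦ₁ : ∀ t₀ : ℝ, |t₀| < δ →
      HasDerivAt (fun t => ∫ p in C, -(b p) * exp (-(a p + t * b p)))
        (∫ p in C, b p ^ 2 * exp (-(a p + t₀ * b p))) t₀ := by
    intro t₀ ht₀
    have hrpos : 0 < δ - |t₀| := by linarith
    have hcF : ∀ x : ℝ, Continuous fun p => -(b p) * exp (-(a p + x * b p)) := fun x =>
      hbc.neg.mul (continuous_exp.comp (hac.add (continuous_const.mul hbc)).neg)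
    have hcF' : ∀ x : ℝ, Continuous fun p => b p ^ 2 * exp (-(a p + x * b p)) := fun x =>
      (hbc.pow 2).mul (continuous_exp.comp (hac.add (continuous_const.mul hbc)).neg)
    refine (hasDerivAt_integral_of_dominated_loc_of_deriv_le (𝕜 := ℝ)
      (μ := (volume : Measure (EuclideanSpace ℝ (Fin (m+1)))).restrict C)
      (F := fun t p => -(b p) * exp (-(a p + t * b p)))
      (F' := fun t p => b p ^ 2 * exp (-(a p + t * b p)))
      (x₀ := t₀)
      (bound := fun p => (‖ν‖ / ε) ^ 2 * (a p ^ 2 * exp (-(2⁻¹ * a p))))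
      (Metric.ball_mem_nhds t₀ hrpos)
      (Filter.Eventually.of_forall fun x => (hcF x).aestronglyMeasurable.restrict)
      ((hderΦ t₀ ht₀).1) ((hcF' t₀).aestronglyMeasurable.restrict) ?_ ?_ ?_).2
    · -- bound
      refine (ae_restrict_iff' hmeas).2 (ae_of_all _ fun p hp => fun x hx => ?_)
      rw [Real.norm_eq_abs, abs_mul, abs_of_pos (exp_pos _), abs_pow, sq_abs]
      calc b p ^ 2 * exp (-(a p + x * b p))
          ≤ (‖ν‖ / ε * a p) ^ 2 * exp (-(2⁻¹ * a p)) := by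
            refine mul_le_mul ?_ (exp_le_exp.2 ?_) (exp_pos _).le (sq_nonneg _)
            · rw [← sq_abs (b p)]
              exact pow_le_pow_left₀ (abs_nonneg _) (hbound_ab p hp) 2
            · have := hhalf x (hballabs t₀ ht₀ x hx) p hp; linarith
      _ = (‖ν‖ / ε) ^ 2 * (a p ^ 2 * exp (-(2⁻¹ * a p))) := by ring
    · -- bound integrable
      exact (hDk 2).const_mul ((‖ν‖ / ε) ^ 2)
    · exact ae_of_all _ fun p x _ => hder2 p x
  -- assembly
  have hfacne : (((m+1)! : ℕ) : ℝ) ≠ 0 := Nat.cast_ne_zero.2 (Nat.factorial_ne_zero _)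
  set c' : ℝ := (m + 1 : ℝ) / (((m+1)! : ℕ) : ℝ) with hc'
  have hfΦ : EqOn (fun t : ℝ => (m + 1 : ℝ) * (volume {p ∈ C | ⟪p, ξ' + t • ν⟫ ≤ 1}).toReal)
      (fun t => c' * ∫ p in C, exp (-(a p + t * b p))) (Metric.ball (0:ℝ) δ) := by
    intro t ht
    rw [mem_ball_zero_iff, Real.norm_eq_abs] at ht
    simp only []
    rw [hK0 t ht.le, hc']
    field_simp
  have habs : ∀ t ∈ Metric.ball (0:ℝ) δ, |t| < δ := fun t ht => by
    rw [mem_ball_zero_iff, Real.norm_eq_abs] at ht; exact ht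
  have hd1ev : deriv (fun t : ℝ => (m + 1 : ℝ) * (volume {p ∈ C | ⟪p, ξ' + t • ν⟫ ≤ 1}).toReal)
      =ᶠ[nhds 0] fun t => c' * ∫ p in C, -(b p) * exp (-(a p + t * b p)) := by
    refine Filter.eventually_of_mem
      (Metric.isOpen_ball.mem_nhds (Metric.mem_ball_self hδ)) fun t₀ ht₀ => ?_
    have h1 := Filter.EventuallyEq.deriv_eq
      (Filter.eventuallyEq_of_mem (Metric.isOpen_ball.mem_nhds ht₀) hfΦ)
    rw [h1]
    exact (((hderΦ t₀ (habs t₀ ht₀)).2).const_mul c').deriv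
  have hfinal : deriv (deriv
      (fun t : ℝ => (m + 1 : ℝ) * (volume {p ∈ C | ⟪p, ξ' + t • ν⟫ ≤ 1}).toReal)) 0
      = c' * ∫ p in C, b p ^ 2 * exp (-(a p + 0 * b p)) := by
    rw [Filter.EventuallyEq.deriv_eq hd1ev]
    exact ((hderΦ₁ 0 (by rw [abs_zero]; exact hδ)).const_mul c').deriv
  have hzero : (∫ p in C, b p ^ 2 * exp (-(a p + 0 * b p)))
      = ∫ p in C, b p ^ 2 * exp (-(a p)) := by
    simp only [zero_mul, add_zero]
  have hA : deriv (deriv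
      (fun t : ℝ => (m + 1 : ℝ) * (volume {p ∈ C | ⟪p, ξ' + t • ν⟫ ≤ 1}).toReal)) 0
      = ((m + 1) * (m + 2) * (m + 3) : ℝ) *
          ∫ p in {p ∈ C | ⟪p, ξ'⟫ ≤ 1}, ⟪p, ν⟫ ^ 2 ∂volume := by
    rw [hfinal, hzero, hK2, hc']
    have e1 : ((m+3)! : ℕ) = (m+3) * ((m+2) * (m+1)!) := by
      rw [show m+3 = (m+2)+1 from rfl, Nat.factorial_succ,
        show m+2 = (m+1)+1 from rfl, Nat.factorial_succ]
    rw [e1]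
    push_cast
    field_simp
  refine ⟨hA, ?_⟩
  rw [hA]
  exact mul_nonneg (by positivity) (integral_nonneg fun p => sq_nonneg _)
end

section
/- Let C be a convex polyhedral cone in ℝ^{m+1} with nonempty interior. The function ξ' ↦ log Vol_{m+1}({p ∈ C : ⟨p,ξ'⟩ ≤ 1}) is strictly convex on the interior of the dual cone C*. -/
open MeasureTheory RealInnerProductSpace Set Pointwise

namespace Stmt5

section Hyper
variable {E : Type*} [NormedAddCommGroup E] [InnerProductSpace ℝ E]


variable {E : Type*} [NormedAddCommGroup E] [InnerProductSpace ℝ E]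

-- hyperplane has measure zero
lemma hyperplane_null [MeasurableSpace E] [BorelSpace E] [FiniteDimensional ℝ E]
    (μ : Measure E) [μ.IsAddHaarMeasure] {v : E} (hv : v ≠ 0) (c : ℝ) :
    μ {p : E | ⟪p, v⟫ = c} = 0 := by
  set S : Submodule ℝ E := (ℝ ∙ v)ᗮ with hS
  have hSset : (S : Set E) = {p : E | ⟪p, v⟫ = 0} := by
    ext p
    simp [hS, Submodule.mem_orthogonal_singleton_iff_inner_left]
  have hSne : S ≠ ⊤ := by
    intro h
    apply hv
    have : v ∈ S := h ▸ Submodule.mem_top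
    have := (Submodule.mem_orthogonal_singleton_iff_inner_left.mp this)
    simpa [real_inner_self_eq_norm_sq] using this
  set w : E := (c / ⟪v, v⟫) • v with hw
  have hset : {p : E | ⟪p, v⟫ = c} = (fun p => p + (-w)) ⁻¹' (S : Set E) := by
    ext p
    have hvv : ⟪v, v⟫ ≠ 0 := (@inner_self_ne_zero ℝ _ _ _ _ v).mpr hv
    simp only [hSset, mem_preimage, mem_setOf_eq, inner_add_left, inner_neg_left, hw,
      real_inner_smul_left]
    field_simp
    constructor <;> intro h <;> linarith
  rw [hset, measure_preimage_add_right]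
  exact Measure.addHaar_submodule μ S hSne


end Hyper

section Mid
variable {E : Type*} [AddCommGroup E] [Module ℝ E]


variable {E : Type*} [AddCommGroup E] [Module ℝ E]

lemma aux_le {f : E → ℝ} {s : Set E} (hc : ConvexOn ℝ s f)
    (h : ∀ x ∈ s, ∀ y ∈ s, x ≠ y → f ((1/2 : ℝ) • x + (1/2 : ℝ) • y) < (f x + f y) / 2)
    {x y : E} (hx : x ∈ s) (hy : y ∈ s) (hxy : x ≠ y) {a b : ℝ} (ha : 0 < a) (hb : 0 < b)
    (hab : a + b = 1) (hab2 : a ≤ b) : f (a • x + b • y) < a * f x + b * f y := by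
  have h2a : 2 * a ≤ 1 := by linarith
  set c : E := (2 * a) • x + (1 - 2 * a) • y with hcdef
  have hcs : c ∈ s := hc.1 hx hy (by positivity) (by linarith) (by ring)
  have hcy : c ≠ y := by
    intro hcy
    apply hxy
    have : (2 * a) • x = (2 * a) • y := by
      have := hcy
      rw [hcdef] at this
      have h1 : (2 * a) • x = y - (1 - 2 * a) • y := by
        rw [eq_sub_iff_add_eq]; exact this
      rw [h1, sub_smul, one_smul]; abel
    exact smul_right_injective E (by positivity) this
  have hmid : (1/2 : ℝ) • c + (1/2 : ℝ) • y = a • x + b • y := by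
    rw [hcdef, smul_add, smul_smul, smul_smul]
    have hb' : b = 1 - a := by linarith
    rw [hb']
    rw [show (1/2 : ℝ) * (2 * a) = a by ring]
    rw [add_assoc, ← add_smul]
    congr 1
    ring
  have h1 := h c hcs y hy hcy
  rw [hmid] at h1
  have h2 : f c ≤ (2 * a) * f x + (1 - 2 * a) * f y :=
    hc.2 hx hy (by positivity) (by linarith) (by ring)
  have h3 : b * f y = (1 - a) * f y := by rw [show b = 1 - a by linarith]
  linarith

lemma strictConvexOn_of_midpoint {f : E → ℝ} {s : Set E} (hc : ConvexOn ℝ s f)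
    (h : ∀ x ∈ s, ∀ y ∈ s, x ≠ y → f ((1/2 : ℝ) • x + (1/2 : ℝ) • y) < (f x + f y) / 2) :
    StrictConvexOn ℝ s f := by
  refine ⟨hc.1, fun x hx y hy hxy a b ha hb hab => ?_⟩
  rcases le_total a b with hab2 | hab2
  · exact aux_le hc h hx hy hxy ha hb hab hab2
  · have := aux_le hc h hy hx (Ne.symm hxy) hb ha (by linarith) hab2
    rw [add_comm (b • y), add_comm (b * f y)] at this
    exact this


end Mid


variable {m : ℕ}

lemma scaling {C : Set (EuclideanSpace ℝ (Fin (m+1)))}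
    (hcone : ∀ (r : ℝ), 0 ≤ r → ∀ p ∈ C, r • p ∈ C)
    (ξ : EuclideanSpace ℝ (Fin (m+1))) {t : ℝ} (ht : 0 < t) :
    {p ∈ C | ⟪p, ξ⟫ ≤ t} = t • {p ∈ C | ⟪p, ξ⟫ ≤ 1} := by
  ext p
  constructor
  · rintro ⟨hpC, hpt⟩
    refine ⟨t⁻¹ • p, ⟨hcone t⁻¹ (by positivity) p hpC, ?_⟩, ?_⟩
    · rw [real_inner_smul_left]
      rw [inv_mul_le_iff₀ ht, mul_one]
      exact hpt
    · show t • (t⁻¹ • p) = p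
      rw [smul_smul, mul_inv_cancel₀ ht.ne', one_smul]
  · rintro ⟨q, ⟨hqC, hq1⟩, rfl⟩
    refine ⟨hcone t ht.le q hqC, ?_⟩
    rw [real_inner_smul_left]
    calc t * ⟪q, ξ⟫ ≤ t * 1 := by nlinarith
    _ = t := mul_one t

lemma measure_scaled {C : Set (EuclideanSpace ℝ (Fin (m+1)))}
    (hcone : ∀ (r : ℝ), 0 ≤ r → ∀ p ∈ C, r • p ∈ C)
    (ξ : EuclideanSpace ℝ (Fin (m+1))) {t : ℝ} (ht : 0 < t) :
    volume {p ∈ C | ⟪p, ξ⟫ ≤ t} =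
      ENNReal.ofReal (t ^ (m+1)) * volume {p ∈ C | ⟪p, ξ⟫ ≤ 1} := by
  rw [scaling hcone ξ ht, Measure.addHaar_smul_of_nonneg volume ht.le,
    finrank_euclideanSpace_fin]

lemma gamma_lintegral :
    ∫⁻ t in Ioi (0:ℝ), ENNReal.ofReal (Real.exp (-t) * t ^ (m+1)) =
      ENNReal.ofReal (((m+1).factorial : ℝ)) := by
  have h1 : (((m+1).factorial : ℝ)) = Real.Gamma ((m+1 : ℕ) + 1) := by
    rw [Real.Gamma_nat_eq_factorial]
  have h2 : Real.Gamma ((m+1 : ℕ) + 1) = ∫ x in Ioi (0:ℝ), Real.exp (-x) * x ^ ((((m+1:ℕ)) + 1 : ℝ) - 1) := by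
    exact Real.Gamma_eq_integral (by positivity)
  have h3 : EqOn (fun x : ℝ => Real.exp (-x) * x ^ ((((m+1:ℕ)) + 1 : ℝ) - 1))
      (fun x : ℝ => Real.exp (-x) * x ^ (m+1)) (Ioi 0) := by
    intro x _
    simp only
    congr 1
    rw [show (((m+1:ℕ)) + 1 : ℝ) - 1 = ((m+1 : ℕ) : ℝ) by push_cast; ring,
      Real.rpow_natCast]
  have hint : IntegrableOn (fun x : ℝ => Real.exp (-x) * x ^ (m+1)) (Ioi 0) := by
    have := Real.GammaIntegral_convergent (s := ((m+1:ℕ)) + 1) (by positivity)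
    exact (integrableOn_congr_fun h3 measurableSet_Ioi).mp this
  rw [← ofReal_integral_eq_lintegral_ofReal hint]
  · rw [h1, h2, setIntegral_congr_fun measurableSet_Ioi h3]
  · filter_upwards [ae_restrict_mem measurableSet_Ioi] with x hx
    have : (0:ℝ) < x := hx
    positivity

lemma key {C : Set (EuclideanSpace ℝ (Fin (m+1)))} (hmeas : MeasurableSet C)
    (hcone : ∀ (r : ℝ), 0 ≤ r → ∀ p ∈ C, r • p ∈ C)
    {ξ : EuclideanSpace ℝ (Fin (m+1))} (hξ : ∀ p ∈ C, 0 ≤ ⟪p, ξ⟫) :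
    (∫⁻ p in C, ENNReal.ofReal (Real.exp (-⟪p, ξ⟫))) =
      ENNReal.ofReal (((m+1).factorial : ℝ)) * volume {p ∈ C | ⟪p, ξ⟫ ≤ 1} := by
  have hφc : Continuous fun p : EuclideanSpace ℝ (Fin (m+1)) => ⟪p, ξ⟫ :=
    continuous_id.inner continuous_const
  -- step 1 : pointwise layer-cake
  have step1 : ∀ p ∈ C, ENNReal.ofReal (Real.exp (-⟪p, ξ⟫)) =
      ∫⁻ t in Ioi (0:ℝ), (Ici ⟪p, ξ⟫).indicator (fun t => ENNReal.ofReal (Real.exp (-t))) t := by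
    intro p hp
    set a := ⟪p, ξ⟫ with ha
    have ha0 : 0 ≤ a := hξ p hp
    have hres : (volume.restrict (Ioi (0:ℝ))).restrict (Ici a) = volume.restrict (Ioi a) := by
      rw [Measure.restrict_restrict measurableSet_Ici]
      apply Measure.restrict_congr_set
      rcases eq_or_lt_of_le ha0 with h | h
      · rw [← h]
        have h2 : Ici (0:ℝ) ∩ Ioi 0 = Ioi 0 := inter_eq_right.mpr Ioi_subset_Ici_self
        rw [h2]
        exact Filter.EventuallyEq.rfl
      · have h2 : Ici a ∩ Ioi (0:ℝ) = Ici a :=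
          inter_eq_left.mpr (fun x hx => lt_of_lt_of_le h hx)
        rw [h2]
        exact (Ioi_ae_eq_Ici (a := a)).symm
    rw [lintegral_indicator measurableSet_Ici, hres,
      ← ofReal_integral_eq_lintegral_ofReal]
    · rw [integral_exp_neg_Ioi]
    · exact exp_neg_integrableOn_Ioi a one_pos |>.congr_fun (by intro x _; simp) measurableSet_Ioi
    · exact ae_of_all _ fun x => (Real.exp_pos _).le
  rw [setLIntegral_congr_fun_ae hmeas (ae_of_all _ step1)]
  set F : EuclideanSpace ℝ (Fin (m+1)) × ℝ → ENNReal :=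
    fun z => {z : EuclideanSpace ℝ (Fin (m+1)) × ℝ | ⟪z.1, ξ⟫ ≤ z.2}.indicator
      (fun z => ENNReal.ofReal (Real.exp (-z.2))) z with hF
  have hFeq : ∀ p t, (Ici ⟪p, ξ⟫).indicator (fun t => ENNReal.ofReal (Real.exp (-t))) t
      = F (p, t) := by
    intro p t
    by_cases h : ⟪p, ξ⟫ ≤ t <;> simp [hF, indicator, h]
  have hAmeas : MeasurableSet {z : EuclideanSpace ℝ (Fin (m+1)) × ℝ | ⟪z.1, ξ⟫ ≤ z.2} :=
    measurableSet_le (hφc.comp continuous_fst).measurable continuous_snd.measurable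
  have hFmeas : Measurable F :=
    Measurable.indicator ((Real.continuous_exp.comp continuous_snd.neg).measurable.ennreal_ofReal)
      hAmeas
  have hswap : (∫⁻ p in C, ∫⁻ t in Ioi (0:ℝ),
        (Ici ⟪p, ξ⟫).indicator (fun t => ENNReal.ofReal (Real.exp (-t))) t)
      = ∫⁻ t in Ioi (0:ℝ), ∫⁻ p in C, F (p, t) := by
    simp_rw [hFeq]
    exact lintegral_lintegral_swap hFmeas.aemeasurable
  rw [hswap]
  have hinner : ∀ t ∈ Ioi (0:ℝ), (∫⁻ p in C, F (p, t))
      = ENNReal.ofReal (Real.exp (-t) * t ^ (m+1)) * volume {p ∈ C | ⟪p, ξ⟫ ≤ 1} := by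
    intro t ht
    have h1 : ∀ p, F (p, t) = {p : EuclideanSpace ℝ (Fin (m+1)) | ⟪p, ξ⟫ ≤ t}.indicator
        (fun _ => ENNReal.ofReal (Real.exp (-t))) p := by
      intro p
      by_cases h : ⟪p, ξ⟫ ≤ t <;> simp [hF, indicator, h]
    simp_rw [h1]
    rw [lintegral_indicator_const (measurableSet_le hφc.measurable measurable_const),
      Measure.restrict_apply (measurableSet_le hφc.measurable measurable_const)]
    have h2 : {p : EuclideanSpace ℝ (Fin (m+1)) | ⟪p, ξ⟫ ≤ t} ∩ C = {p ∈ C | ⟪p, ξ⟫ ≤ t} := by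
      ext p; exact and_comm
    rw [h2, measure_scaled hcone ξ ht, ENNReal.ofReal_mul (Real.exp_pos _).le, mul_assoc]
  rw [setLIntegral_congr_fun_ae measurableSet_Ioi (ae_of_all _ hinner)]
  have hmeas' : Measurable fun t : ℝ => ENNReal.ofReal (Real.exp (-t) * t ^ (m+1)) := by
    fun_prop
  rw [lintegral_mul_const _ hmeas', gamma_lintegral]


variable {m : ℕ} {C : Set (EuclideanSpace ℝ (Fin (m+1)))}

lemma coercive {ξ : EuclideanSpace ℝ (Fin (m+1))}
    (hξ : ξ ∈ interior {y : EuclideanSpace ℝ (Fin (m+1)) | ∀ p ∈ C, 0 ≤ ⟪y, p⟫}) :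
    ∃ ε > (0:ℝ), ∀ p ∈ C, ε * ‖p‖ ≤ ⟪p, ξ⟫ := by
  rw [mem_interior_iff_mem_nhds, Metric.mem_nhds_iff] at hξ
  obtain ⟨ε, hε, hball⟩ := hξ
  refine ⟨ε / 2, by linarith, fun p hp => ?_⟩
  rcases eq_or_ne p 0 with rfl | hp0
  · simp
  have hpn : (0:ℝ) < ‖p‖ := norm_pos_iff.mpr hp0
  set y := ξ - ((ε / 2) / ‖p‖) • p with hy
  have hyball : y ∈ Metric.ball ξ ε := by
    rw [Metric.mem_ball, dist_eq_norm, hy]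
    have : ξ - (ε / 2 / ‖p‖) • p - ξ = -((ε / 2 / ‖p‖) • p) := by abel
    rw [this, norm_neg, norm_smul, Real.norm_eq_abs, abs_of_pos (by positivity)]
    rw [div_mul_cancel₀ _ hpn.ne']
    linarith
  have h0 : 0 ≤ ⟪y, p⟫ := hball hyball p hp
  rw [hy, inner_sub_left, real_inner_smul_left, real_inner_self_eq_norm_sq] at h0
  have h1 : ε / 2 / ‖p‖ * (‖p‖ * ‖p‖) = ε / 2 * ‖p‖ := by
    field_simp
  rw [real_inner_comm]
  nlinarith [h0]

lemma vol_finite {ξ : EuclideanSpace ℝ (Fin (m+1))}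
    (hξ : ξ ∈ interior {y : EuclideanSpace ℝ (Fin (m+1)) | ∀ p ∈ C, 0 ≤ ⟪y, p⟫}) :
    volume {p ∈ C | ⟪p, ξ⟫ ≤ 1} < ⊤ := by
  obtain ⟨ε, hε, hco⟩ := coercive hξ
  have hsub : {p ∈ C | ⟪p, ξ⟫ ≤ 1} ⊆ Metric.closedBall 0 ε⁻¹ := by
    rintro p ⟨hpC, hp1⟩
    rw [Metric.mem_closedBall, dist_zero_right]
    have h1 := hco p hpC
    nlinarith [h1, mul_inv_cancel₀ hε.ne', hε]
  exact lt_of_le_of_lt (measure_mono hsub) measure_closedBall_lt_top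

lemma vol_pos (hcone : ∀ (r : ℝ), 0 ≤ r → ∀ p ∈ C, r • p ∈ C)
    (hint : (interior C).Nonempty) (ξ : EuclideanSpace ℝ (Fin (m+1))) :
    0 < volume {p ∈ C | ⟪p, ξ⟫ ≤ 1} := by
  obtain ⟨x, hx⟩ := hint
  rw [mem_interior_iff_mem_nhds, Metric.mem_nhds_iff] at hx
  obtain ⟨r, hr, hball⟩ := hx
  set c : ℝ := min 1 (((‖x‖ + r) * (‖ξ‖ + 1))⁻¹) with hc
  have hxr : (0:ℝ) < ‖x‖ + r := by positivity
  have hcpos : 0 < c := lt_min one_pos (by positivity)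
  have hsub : c • Metric.ball x r ⊆ {p ∈ C | ⟪p, ξ⟫ ≤ 1} := by
    rintro _ ⟨q, hq, rfl⟩
    refine ⟨hcone c hcpos.le q (hball hq), ?_⟩
    rw [real_inner_smul_left]
    have hd : ‖q - x‖ < r := by rw [← dist_eq_norm]; exact Metric.mem_ball.mp hq
    have hqn : ‖q‖ < ‖x‖ + r := by
      calc ‖q‖ = ‖x + (q - x)‖ := by congr 1; abel
      _ ≤ ‖x‖ + ‖q - x‖ := norm_add_le _ _
      _ < ‖x‖ + r := by linarith
    have hiq : ⟪q, ξ⟫ ≤ (‖x‖ + r) * (‖ξ‖ + 1) := by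
      calc ⟪q, ξ⟫ ≤ ‖q‖ * ‖ξ‖ := real_inner_le_norm q ξ
      _ ≤ (‖x‖ + r) * (‖ξ‖ + 1) := by nlinarith [norm_nonneg q, norm_nonneg ξ]
    have hcle : c ≤ ((‖x‖ + r) * (‖ξ‖ + 1))⁻¹ := min_le_right _ _
    have hkey : ((‖x‖ + r) * (‖ξ‖ + 1))⁻¹ * ((‖x‖ + r) * (‖ξ‖ + 1)) = 1 :=
      inv_mul_cancel₀ (by positivity)
    rcases le_or_gt ⟪q, ξ⟫ 0 with h | h
    · nlinarith
    · nlinarith [mul_le_mul hcle hiq h.le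
        (by positivity : (0:ℝ) ≤ ((‖x‖ + r) * (‖ξ‖ + 1))⁻¹)]
  refine lt_of_lt_of_le ?_ (measure_mono hsub)
  rw [Measure.addHaar_smul_of_nonneg volume hcpos.le]
  exact ENNReal.mul_pos (ENNReal.ofReal_pos.mpr (by positivity)).ne'
    (Metric.measure_ball_pos volume x hr).ne'


variable {m : ℕ}

lemma holder {C : Set (EuclideanSpace ℝ (Fin (m+1)))}
    {φ0 φ1 : EuclideanSpace ℝ (Fin (m+1)) → ℝ} (h0 : Measurable φ0) (h1 : Measurable φ1)
    {a b : ℝ} (ha : 0 < a) (hb : 0 < b) (hab : a + b = 1) :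
    (∫⁻ p in C, ENNReal.ofReal (Real.exp (-(a * φ0 p + b * φ1 p))))
      ≤ (∫⁻ p in C, ENNReal.ofReal (Real.exp (-φ0 p))) ^ a *
        (∫⁻ p in C, ENNReal.ofReal (Real.exp (-φ1 p))) ^ b := by
  have ha1 : a < 1 := by linarith
  have hpq : (a⁻¹).HolderConjugate (b⁻¹) := by
    rw [Real.holderConjugate_iff]
    constructor
    · rw [lt_inv_comm₀ one_pos ha]; simpa using ha1
    · rw [inv_inv, inv_inv]; exact hab
  set f : EuclideanSpace ℝ (Fin (m+1)) → ENNReal :=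
    fun p => ENNReal.ofReal (Real.exp (-(a * φ0 p))) with hf
  set g : EuclideanSpace ℝ (Fin (m+1)) → ENNReal :=
    fun p => ENNReal.ofReal (Real.exp (-(b * φ1 p))) with hg
  have hfm : AEMeasurable f (volume.restrict C) := by fun_prop
  have hgm : AEMeasurable g (volume.restrict C) := by fun_prop
  have hfg : ∀ p, ENNReal.ofReal (Real.exp (-(a * φ0 p + b * φ1 p))) = (f * g) p := by
    intro p
    simp only [hf, hg, Pi.mul_apply]
    rw [← ENNReal.ofReal_mul (Real.exp_pos _).le, ← Real.exp_add]
    ring_nf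
  have hfp : ∀ p, f p ^ (a⁻¹) = ENNReal.ofReal (Real.exp (-φ0 p)) := by
    intro p
    rw [hf, ENNReal.ofReal_rpow_of_pos (Real.exp_pos _), ← Real.exp_mul]
    congr 1
    field_simp
  have hgp : ∀ p, g p ^ (b⁻¹) = ENNReal.ofReal (Real.exp (-φ1 p)) := by
    intro p
    rw [hg, ENNReal.ofReal_rpow_of_pos (Real.exp_pos _), ← Real.exp_mul]
    congr 1
    field_simp
  calc (∫⁻ p in C, ENNReal.ofReal (Real.exp (-(a * φ0 p + b * φ1 p))))
      = ∫⁻ p in C, (f * g) p := by simp_rw [hfg]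
    _ ≤ (∫⁻ p in C, f p ^ (a⁻¹)) ^ (1 / a⁻¹) * (∫⁻ p in C, g p ^ (b⁻¹)) ^ (1 / b⁻¹) :=
        ENNReal.lintegral_mul_le_Lp_mul_Lq _ hpq hfm hgm
    _ = (∫⁻ p in C, ENNReal.ofReal (Real.exp (-φ0 p))) ^ a *
        (∫⁻ p in C, ENNReal.ofReal (Real.exp (-φ1 p))) ^ b := by
        simp_rw [hfp, hgp, one_div, inv_inv]

lemma logstep {x0 x1 xm : ENNReal} {a b : ℝ} (ha : 0 < a) (hb : 0 < b)
    (h0 : x0 ≠ 0) (h0' : x0 ≠ ⊤) (h1 : x1 ≠ 0) (h1' : x1 ≠ ⊤) (hm : xm ≠ 0)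
    (hle : xm ≤ x0 ^ a * x1 ^ b) :
    Real.log xm.toReal ≤ a * Real.log x0.toReal + b * Real.log x1.toReal := by
  have hne : x0 ^ a * x1 ^ b ≠ ⊤ :=
    ENNReal.mul_ne_top (ENNReal.rpow_ne_top_of_nonneg ha.le h0')
      (ENNReal.rpow_ne_top_of_nonneg hb.le h1')
  have h2 : xm.toReal ≤ (x0 ^ a * x1 ^ b).toReal := ENNReal.toReal_mono hne hle
  rw [ENNReal.toReal_mul, ← ENNReal.toReal_rpow, ← ENNReal.toReal_rpow] at h2
  have hxm : 0 < xm.toReal := ENNReal.toReal_pos hm (ne_top_of_le_ne_top hne hle)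
  have h3 := Real.log_le_log hxm h2
  rwa [Real.log_mul (Real.rpow_pos_of_pos (ENNReal.toReal_pos h0 h0') a).ne'
      (Real.rpow_pos_of_pos (ENNReal.toReal_pos h1 h1') b).ne',
    Real.log_rpow (ENNReal.toReal_pos h0 h0'), Real.log_rpow (ENNReal.toReal_pos h1 h1')] at h3


end Stmt5

set_option maxHeartbeats 1000000 in
/-- the function `ξ' ↦ log Vol_{m+1}({p ∈ C : ⟪p,ξ'⟫ ≤ 1})` is strictly convex
on the interior of the dual cone `C* = {y : ⟪y,p⟫ ≥ 0 ∀ p ∈ C}`. -/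
theorem stmt5 (m d : ℕ) (ℓ : Fin d → EuclideanSpace ℝ (Fin (m + 1)))
    (C : Set (EuclideanSpace ℝ (Fin (m + 1))))
    (hC : C = {p | ∀ a, 0 ≤ ⟪p, ℓ a⟫})
    (hint : (interior C).Nonempty) :
    StrictConvexOn ℝ (interior {y : EuclideanSpace ℝ (Fin (m + 1)) | ∀ p ∈ C, 0 ≤ ⟪y, p⟫})
      (fun ξ' => Real.log (volume {p ∈ C | ⟪p, ξ'⟫ ≤ 1}).toReal) := by
  classical
  set D : Set (EuclideanSpace ℝ (Fin (m + 1))) :=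
    {y : EuclideanSpace ℝ (Fin (m + 1)) | ∀ p ∈ C, 0 ≤ ⟪y, p⟫} with hD
  set s : Set (EuclideanSpace ℝ (Fin (m + 1))) := interior D with hs
  -- basic structural facts
  have hcone : ∀ (r : ℝ), 0 ≤ r → ∀ p ∈ C, r • p ∈ C := by
    intro r hr p hp
    rw [hC] at hp ⊢
    intro i
    rw [real_inner_smul_left]
    exact mul_nonneg hr (hp i)
  have hCclosed : IsClosed C := by
    rw [hC, show {p : EuclideanSpace ℝ (Fin (m + 1)) | ∀ a, 0 ≤ ⟪p, ℓ a⟫}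
        = ⋂ i, {p : EuclideanSpace ℝ (Fin (m + 1)) | 0 ≤ ⟪p, ℓ i⟫} by
      ext p; simp [mem_iInter]]
    exact isClosed_iInter fun i =>
      isClosed_le continuous_const (continuous_id.inner continuous_const)
  have hmeas : MeasurableSet C := hCclosed.measurableSet
  have hDconv : Convex ℝ D := by
    intro y1 h1 y2 h2 a b ha hb hab
    intro p hp
    have e1 := h1 p hp
    have e2 := h2 p hp
    rw [inner_add_left, real_inner_smul_left, real_inner_smul_left]
    exact add_nonneg (mul_nonneg ha e1) (mul_nonneg hb e2)
  have hsconv : Convex ℝ s := hDconv.interior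
  have hdual : ∀ ξ ∈ s, ∀ p ∈ C, 0 ≤ ⟪p, ξ⟫ := by
    intro ξ hξ p hp
    rw [real_inner_comm]
    exact interior_subset hξ p hp
  -- the Laplace transform
  set I : EuclideanSpace ℝ (Fin (m + 1)) → ENNReal :=
    fun ξ => ∫⁻ p in C, ENNReal.ofReal (Real.exp (-⟪p, ξ⟫)) with hI
  set G : EuclideanSpace ℝ (Fin (m + 1)) → ℝ :=
    fun ξ => ∫ p in C, Real.exp (-⟪p, ξ⟫) with hG
  set Φ : EuclideanSpace ℝ (Fin (m + 1)) → ℝ := fun ξ => Real.log (G ξ) with hΦ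
  have hfactpos : (0 : ℝ) < ((m+1).factorial : ℝ) := by
    exact_mod_cast Nat.factorial_pos (m+1)
  have hkey : ∀ ξ ∈ s, I ξ = ENNReal.ofReal ((m+1).factorial : ℝ)
      * volume {p ∈ C | ⟪p, ξ⟫ ≤ 1} := fun ξ hξ => Stmt5.key hmeas hcone (hdual ξ hξ)
  have hKpos : ∀ ξ : EuclideanSpace ℝ (Fin (m + 1)), 0 < volume {p ∈ C | ⟪p, ξ⟫ ≤ 1} :=
    Stmt5.vol_pos hcone hint
  have hKfin : ∀ ξ ∈ s, volume {p ∈ C | ⟪p, ξ⟫ ≤ 1} < ⊤ := fun ξ hξ => Stmt5.vol_finite hξ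
  have hIpos : ∀ ξ ∈ s, I ξ ≠ 0 := by
    intro ξ hξ
    rw [hkey ξ hξ]
    exact (ENNReal.mul_pos (ENNReal.ofReal_pos.mpr hfactpos).ne' (hKpos ξ).ne').ne'
  have hIfin : ∀ ξ ∈ s, I ξ ≠ ⊤ := by
    intro ξ hξ
    rw [hkey ξ hξ]
    exact (ENNReal.mul_lt_top ENNReal.ofReal_lt_top (hKfin ξ hξ)).ne
  have hInt : ∀ ξ ∈ s, Integrable (fun p => Real.exp (-⟪p, ξ⟫)) (volume.restrict C) := by
    intro ξ hξ
    refine ⟨(Real.continuous_exp.comp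
      (continuous_id.inner continuous_const).neg).aestronglyMeasurable, ?_⟩
    rw [hasFiniteIntegral_iff_ofReal (ae_of_all _ fun p => (Real.exp_pos _).le)]
    exact lt_of_le_of_ne le_top (hIfin ξ hξ)
  have hGI : ∀ ξ ∈ s, ENNReal.ofReal (G ξ) = I ξ := fun ξ hξ =>
    ofReal_integral_eq_lintegral_ofReal (hInt ξ hξ) (ae_of_all _ fun p => (Real.exp_pos _).le)
  have hGtoReal : ∀ ξ ∈ s, (I ξ).toReal = G ξ := by
    intro ξ hξ
    rw [← hGI ξ hξ, ENNReal.toReal_ofReal]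
    exact integral_nonneg fun p => (Real.exp_pos _).le
  have hGpos : ∀ ξ ∈ s, 0 < G ξ := by
    intro ξ hξ
    rw [← hGtoReal ξ hξ]
    exact ENNReal.toReal_pos (hIpos ξ hξ) (hIfin ξ hξ)
  -- inner product expansion of combinations
  have hcomb : ∀ (a b : ℝ) (x y p : EuclideanSpace ℝ (Fin (m + 1))),
      ⟪p, a • x + b • y⟫ = a * ⟪p, x⟫ + b * ⟪p, y⟫ := by
    intro a b x y p
    rw [inner_add_right, real_inner_smul_right, real_inner_smul_right]
  -- convexity of Φ on s via Hölder
  have hconv : ConvexOn ℝ s Φ := by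
    refine ⟨hsconv, fun x hx y hy a b ha hb hab => ?_⟩
    rcases eq_or_lt_of_le ha with rfl | ha'
    · simp only [zero_smul, zero_add, zero_mul]
      rw [show b = 1 by linarith]
      simp
    rcases eq_or_lt_of_le hb with rfl | hb'
    · simp only [zero_smul, add_zero, zero_mul]
      rw [show a = 1 by linarith]
      simp
    have hz : a • x + b • y ∈ s := hsconv hx hy ha hb hab
    have hle : I (a • x + b • y) ≤ (I x) ^ a * (I y) ^ b := by
      have h1 : I (a • x + b • y)
          = ∫⁻ p in C, ENNReal.ofReal (Real.exp (-(a * ⟪p, x⟫ + b * ⟪p, y⟫))) := by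
        simp_rw [hI, hcomb]
      rw [h1]
      exact Stmt5.holder ((continuous_id.inner continuous_const).measurable)
        ((continuous_id.inner continuous_const).measurable) ha' hb' hab
    have := Stmt5.logstep ha' hb' (hIpos x hx) (hIfin x hx) (hIpos y hy) (hIfin y hy)
      (hIpos _ hz) hle
    rwa [hGtoReal _ hz, hGtoReal _ hx, hGtoReal _ hy] at this
  -- strict inequality at midpoints
  have hmid : ∀ x ∈ s, ∀ y ∈ s, x ≠ y →
      Φ ((1/2 : ℝ) • x + (1/2 : ℝ) • y) < (Φ x + Φ y) / 2 := by
    intro x hx y hy hxy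
    set z : EuclideanSpace ℝ (Fin (m + 1)) := (1/2 : ℝ) • x + (1/2 : ℝ) • y with hz
    have hzs : z ∈ s := hsconv hx hy (by norm_num) (by norm_num) (by norm_num)
    set A := G x with hA
    set Cc := G y with hCc
    set B := G z with hB
    have hApos := hGpos x hx
    have hCpos := hGpos y hy
    have hBpos := hGpos z hzs
    set f : EuclideanSpace ℝ (Fin (m + 1)) → ℝ := fun p => Real.exp (-(⟪p, x⟫ / 2)) with hf
    set h : EuclideanSpace ℝ (Fin (m + 1)) → ℝ := fun p => Real.exp (-(⟪p, y⟫ / 2)) with hh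
    have e1 : ∀ p, Real.exp (-⟪p, x⟫) = f p * f p := by
      intro p; rw [hf, ← Real.exp_add]; congr 1; ring
    have e2 : ∀ p, Real.exp (-⟪p, y⟫) = h p * h p := by
      intro p; rw [hh, ← Real.exp_add]; congr 1; ring
    have e3 : ∀ p, Real.exp (-⟪p, z⟫) = f p * h p := by
      intro p
      rw [hf, hh, ← Real.exp_add]
      congr 1
      rw [hz, hcomb]
      ring
    -- expansion of the square
    have hsq : ∀ p, (Cc * f p - B * h p) ^ 2 =
        Cc^2 * Real.exp (-⟪p, x⟫) - (2 * Cc * B) * Real.exp (-⟪p, z⟫)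
          + B^2 * Real.exp (-⟪p, y⟫) := by
      intro p
      rw [e1, e2, e3]
      ring
    have int1 := hInt x hx
    have int2 := hInt y hy
    have int3 := hInt z hzs
    have hqint : Integrable (fun p => (Cc * f p - B * h p) ^ 2) (volume.restrict C) := by
      rw [show (fun p => (Cc * f p - B * h p) ^ 2) = fun p =>
          Cc^2 * Real.exp (-⟪p, x⟫) - (2 * Cc * B) * Real.exp (-⟪p, z⟫)
            + B^2 * Real.exp (-⟪p, y⟫) from funext hsq]
      exact ((int1.const_mul _).sub (int3.const_mul _)).add (int2.const_mul _)
    have i1 := int1.const_mul (Cc^2)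
    have i3 := int3.const_mul (2 * Cc * B)
    have i2 := int2.const_mul (B^2)
    have hAint : (∫ p in C, Real.exp (-⟪p, x⟫)) = A := rfl
    have hCint : (∫ p in C, Real.exp (-⟪p, y⟫)) = Cc := rfl
    have hBint : (∫ p in C, Real.exp (-⟪p, z⟫)) = B := rfl
    have hqval : (∫ p in C, (Cc * f p - B * h p) ^ 2)
        = Cc^2 * A - (2 * Cc * B) * B + B^2 * Cc := by
      calc (∫ p in C, (Cc * f p - B * h p) ^ 2)
          = ∫ p in C, (Cc ^ 2 * Real.exp (-⟪p, x⟫) - 2 * Cc * B * Real.exp (-⟪p, z⟫)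
              + B ^ 2 * Real.exp (-⟪p, y⟫)) :=
            integral_congr_ae (ae_of_all _ hsq)
        _ = (∫ p in C, (Cc ^ 2 * Real.exp (-⟪p, x⟫) - 2 * Cc * B * Real.exp (-⟪p, z⟫)))
            + ∫ p in C, B ^ 2 * Real.exp (-⟪p, y⟫) := integral_add (i1.sub i3) i2
        _ = ((∫ p in C, Cc ^ 2 * Real.exp (-⟪p, x⟫))
            - ∫ p in C, 2 * Cc * B * Real.exp (-⟪p, z⟫))
            + ∫ p in C, B ^ 2 * Real.exp (-⟪p, y⟫) := by rw [integral_sub i1 i3]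
        _ = Cc ^ 2 * A - (2 * Cc * B) * B + B ^ 2 * Cc := by
            rw [integral_const_mul, integral_const_mul, integral_const_mul,
              hAint, hCint, hBint]
    have hqnonneg : 0 ≤ ∫ p in C, (Cc * f p - B * h p) ^ 2 :=
      integral_nonneg fun p => sq_nonneg _
    have hCS : B ^ 2 ≤ A * Cc := by nlinarith [hqval, hqnonneg, hCpos]
    rcases lt_or_eq_of_le hCS with hlt | heq
    · -- strict case: conclude
      have hlog := Real.log_lt_log (by positivity : (0:ℝ) < B ^ 2) hlt
      rw [Real.log_pow, Real.log_mul hApos.ne' hCpos.ne'] at hlog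
      push_cast at hlog
      show Real.log (G z) < (Real.log (G x) + Real.log (G y)) / 2
      rw [← hA, ← hCc, ← hB]
      linarith
    · -- equality case: contradiction with positive volume
      exfalso
      have hzero : (∫ p in C, (Cc * f p - B * h p) ^ 2) = 0 := by
        rw [hqval]; nlinarith [heq]
      have hae := (integral_eq_zero_iff_of_nonneg (fun p => sq_nonneg _) hqint).mp hzero
      have hae2 : ∀ᵐ p ∂(volume.restrict C), Cc * f p = B * h p := by
        filter_upwards [hae] with p hp
        have : (Cc * f p - B * h p) ^ 2 = 0 := hp
        have := pow_eq_zero_iff (n := 2) (by norm_num) |>.mp this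
        linarith
      set w : EuclideanSpace ℝ (Fin (m + 1)) := (2⁻¹ : ℝ) • y - (2⁻¹ : ℝ) • x with hw
      have hwne : w ≠ 0 := by
        rw [hw, sub_ne_zero]
        intro hcon
        exact hxy (smul_right_injective (EuclideanSpace ℝ (Fin (m + 1))) (by norm_num) hcon).symm
      set c0 : ℝ := Real.log B - Real.log Cc with hc0
      have hae3 : ∀ᵐ p ∂(volume.restrict C), p ∈ {p : EuclideanSpace ℝ (Fin (m + 1)) | ⟪p, w⟫ = c0} := by
        filter_upwards [hae2] with p hp
        have hfpos := Real.exp_pos (-(⟪p, x⟫ / 2))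
        have hhpos := Real.exp_pos (-(⟪p, y⟫ / 2))
        have hlogeq : Real.log (Cc * f p) = Real.log (B * h p) := by rw [hp]
        rw [Real.log_mul hCpos.ne' (ne_of_gt hfpos), Real.log_mul hBpos.ne' (ne_of_gt hhpos)]
          at hlogeq
        simp only [hf, hh, Real.log_exp] at hlogeq
        show ⟪p, w⟫ = c0
        rw [hw, inner_sub_right, real_inner_smul_right, real_inner_smul_right, hc0]
        linarith
      have hHmeas : MeasurableSet {p : EuclideanSpace ℝ (Fin (m + 1)) | ⟪p, w⟫ = c0} :=
        (isClosed_eq (continuous_id.inner continuous_const) continuous_const).measurableSet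
      have hnull : volume ({p : EuclideanSpace ℝ (Fin (m + 1)) | ⟪p, w⟫ = c0}ᶜ ∩ C) = 0 := by
        have h0 := ae_iff.mp hae3
        have h0' : volume.restrict C ({p : EuclideanSpace ℝ (Fin (m + 1)) | ⟪p, w⟫ = c0}ᶜ) = 0 :=
          h0
        rwa [Measure.restrict_apply hHmeas.compl] at h0'
      have hCnull : volume C = 0 := by
        have hsplit : C ⊆ ({p : EuclideanSpace ℝ (Fin (m + 1)) | ⟪p, w⟫ = c0} ∩ C) ∪ ({p : EuclideanSpace ℝ (Fin (m + 1)) | ⟪p, w⟫ = c0}ᶜ ∩ C) := by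
          intro p hp
          by_cases hmem : p ∈ {p : EuclideanSpace ℝ (Fin (m + 1)) | ⟪p, w⟫ = c0}
          · exact Or.inl ⟨hmem, hp⟩
          · exact Or.inr ⟨hmem, hp⟩
        refine le_antisymm ?_ zero_le
        calc volume C ≤ volume (({p : EuclideanSpace ℝ (Fin (m + 1)) | ⟪p, w⟫ = c0} ∩ C) ∪ ({p : EuclideanSpace ℝ (Fin (m + 1)) | ⟪p, w⟫ = c0}ᶜ ∩ C)) :=
              measure_mono hsplit
        _ ≤ volume ({p : EuclideanSpace ℝ (Fin (m + 1)) | ⟪p, w⟫ = c0} ∩ C) + volume ({p : EuclideanSpace ℝ (Fin (m + 1)) | ⟪p, w⟫ = c0}ᶜ ∩ C) :=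
              measure_union_le _ _
        _ ≤ volume {p : EuclideanSpace ℝ (Fin (m + 1)) | ⟪p, w⟫ = c0} + 0 :=
              add_le_add (measure_mono inter_subset_left) (le_of_eq hnull)
        _ = 0 := by rw [Stmt5.hyperplane_null volume hwne c0, add_zero]
      have hKC : volume {p ∈ C | ⟪p, x⟫ ≤ 1} ≤ volume C :=
        measure_mono fun p hp => hp.1
      have := hKpos x
      rw [hCnull] at hKC
      exact (lt_irrefl 0 (lt_of_lt_of_le this hKC)).elim
  -- assemble strict convexity of Φ
  have hstrict : StrictConvexOn ℝ s Φ := Stmt5.strictConvexOn_of_midpoint hconv hmid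
  -- transfer to the volume function
  have hTeq : ∀ ξ ∈ s, Real.log (volume {p ∈ C | ⟪p, ξ⟫ ≤ 1}).toReal
      = Φ ξ - Real.log ((m+1).factorial : ℝ) := by
    intro ξ hξ
    have hKtr : 0 < (volume {p ∈ C | ⟪p, ξ⟫ ≤ 1}).toReal :=
      ENNReal.toReal_pos (hKpos ξ).ne' (hKfin ξ hξ).ne
    have h1 : G ξ = ((m+1).factorial : ℝ) * (volume {p ∈ C | ⟪p, ξ⟫ ≤ 1}).toReal := by
      rw [← hGtoReal ξ hξ, hkey ξ hξ, ENNReal.toReal_mul, ENNReal.toReal_ofReal hfactpos.le]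
    rw [hΦ]
    simp only
    rw [h1, Real.log_mul hfactpos.ne' hKtr.ne']
    ring
  refine ⟨hsconv, fun x hx y hy hxy a b ha hb hab => ?_⟩
  have hz : a • x + b • y ∈ s := hsconv hx hy ha.le hb.le hab
  have hmain := hstrict.2 hx hy hxy ha hb hab
  have hL : a * Real.log ((m+1).factorial : ℝ) + b * Real.log ((m+1).factorial : ℝ)
      = Real.log ((m+1).factorial : ℝ) := by
    rw [← add_mul, hab, one_mul]
  simp only [hTeq _ hz, hTeq _ hx, hTeq _ hy]
  simp only [smul_eq_mul] at hmain ⊢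
  nlinarith [hmain, hL]
end

section
/- Let C be a convex polyhedral cone in ℝ^{m+1} with nonempty interior, and suppose C = C_1 + ⋯ + C_k is a Minkowski sum of convex polyhedral cones C_α ⊂ C. Fix a point q in the interior of C. Then the function W(ξ') = Σ_{α=1}^k log Vol_{m+1}({p ∈ C_α : ⟨p,ξ'⟩ ≤ 1}) is strictly convex on the set Ξ_q = {ξ' ∈ int C* : ⟨q,ξ'⟩ = 1}, provided each C_α has nonempty interior. -/
open MeasureTheory RealInnerProductSpace Set Pointwise
open scoped ENNReal

section AuxiliaryLemmas

variable {n : ℕ}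

/-- A convex function that is strictly convex at midpoints is strictly convex. -/
lemma strictConvexOn_of_midpoint {E : Type*} [AddCommGroup E] [Module ℝ E]
    {s : Set E} {f : E → ℝ} (hf : ConvexOn ℝ s f)
    (h : ∀ x ∈ s, ∀ y ∈ s, x ≠ y → f ((1/2 : ℝ) • x + (1/2 : ℝ) • y) < (f x + f y) / 2) :
    StrictConvexOn ℝ s f := by
  refine ⟨hf.1, ?_⟩
  have key : ∀ x ∈ s, ∀ y ∈ s, x ≠ y → ∀ a b : ℝ, 0 < a → 0 < b → a + b = 1 → a ≤ b →
      f (a • x + b • y) < a * f x + b * f y := by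
    intro x hx y hy hxy a b ha hb hab hle
    rcases eq_or_lt_of_le hle with heq | hlt
    · have ha2 : a = 1/2 := by linarith
      have hb2 : b = 1/2 := by linarith
      subst ha2; subst hb2
      calc f ((1/2 : ℝ) • x + (1/2 : ℝ) • y) < (f x + f y) / 2 := h x hx y hy hxy
        _ = 1/2 * f x + 1/2 * f y := by ring
    · have ha2 : a < 1/2 := by linarith
      set z : E := (2*a) • x + (1 - 2*a) • y with hz
      have hzs : z ∈ s := hf.1 hx hy (by linarith) (by linarith) (by ring)
      have hzy : z ≠ y := by
        have hd : z - y = (2*a) • (x - y) := by rw [hz]; module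
        have : z - y ≠ 0 := by
          rw [hd]
          exact smul_ne_zero (by positivity) (sub_ne_zero.2 hxy)
        exact sub_ne_zero.1 this
      have hcomb : a • x + b • y = (1/2 : ℝ) • z + (1/2 : ℝ) • y := by
        rw [hz, show b = 1 - a by linarith]; module
      have hcz := hf.2 hx hy (by linarith : (0:ℝ) ≤ 2*a) (by linarith : (0:ℝ) ≤ 1 - 2*a)
        (by ring : 2*a + (1 - 2*a) = 1)
      simp only [smul_eq_mul] at hcz
      calc f (a • x + b • y) = f ((1/2 : ℝ) • z + (1/2 : ℝ) • y) := by rw [hcomb]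
        _ < (f z + f y) / 2 := h z hzs y hy hzy
        _ ≤ ((2*a * f x + (1 - 2*a) * f y) + f y) / 2 := by rw [hz]; linarith
        _ = a * f x + b * f y := by rw [show b = 1 - a by linarith]; ring
  intro x hx y hy hxy a b ha hb hab
  simp only [smul_eq_mul]
  rcases le_total a b with h' | h'
  · exact key x hx y hy hxy a b ha hb hab h'
  · have := key y hy x hx hxy.symm b a hb ha (by linarith) h'
    rw [add_comm (a • x), add_comm (a * f x)]; exact this

lemma ofReal_exp_neg_eq_lintegral (x : ℝ) :
    ENNReal.ofReal (Real.exp (-x)) = ∫⁻ t in Ici x, ENNReal.ofReal (Real.exp (-t)) := by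
  rw [← Measure.restrict_congr_set Ioi_ae_eq_Ici]
  have hint : IntegrableOn (fun t => Real.exp (-t)) (Ioi x) := by
    have := exp_neg_integrableOn_Ioi x (one_pos)
    simpa using this
  rw [← ofReal_integral_eq_lintegral_ofReal hint
    (ae_of_all _ fun t => (Real.exp_pos _).le)]
  rw [integral_exp_neg_Ioi]


lemma lap_eq_const_mul_vol (S : Set (EuclideanSpace ℝ (Fin n))) (hSm : MeasurableSet S)
    (hscale : ∀ t : ℝ, 0 < t → t • S = S) (ξ : EuclideanSpace ℝ (Fin n))
    (hξ : ∀ p ∈ S, 0 ≤ ⟪p, ξ⟫) :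
    ∫⁻ p in S, ENNReal.ofReal (Real.exp (-⟪p, ξ⟫)) =
      (∫⁻ t in Ioi (0:ℝ), ENNReal.ofReal (Real.exp (-t) * t ^ n)) *
        volume {p ∈ S | ⟪p, ξ⟫ ≤ 1} := by
  have hcont : Continuous fun p : EuclideanSpace ℝ (Fin n) => ⟪p, ξ⟫ :=
    continuous_id.inner continuous_const
  -- the sub-level sets are measurable
  have hlev : ∀ t : ℝ, MeasurableSet {p : EuclideanSpace ℝ (Fin n) | ⟪p, ξ⟫ ≤ t} := fun t =>
    (isClosed_le hcont continuous_const).measurableSet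
  -- sub-level sets scale
  have hsect : ∀ t : ℝ, 0 < t → volume {p ∈ S | ⟪p, ξ⟫ ≤ t} =
      ENNReal.ofReal (t ^ n) * volume {p ∈ S | ⟪p, ξ⟫ ≤ 1} := by
    intro t ht
    have hset : {p ∈ S | ⟪p, ξ⟫ ≤ t} = t • {p ∈ S | ⟪p, ξ⟫ ≤ 1} := by
      ext x
      constructor
      · rintro ⟨hxS, hxf⟩
        refine ⟨t⁻¹ • x, ⟨?_, ?_⟩, smul_inv_smul₀ ht.ne' x⟩
        · rw [← hscale t⁻¹ (inv_pos.2 ht)]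
          exact smul_mem_smul_set hxS
        · rw [real_inner_smul_left]
          rw [inv_mul_le_iff₀ ht, mul_one]
          exact hxf
      · rintro ⟨y, ⟨hyS, hyf⟩, rfl⟩
        refine ⟨?_, ?_⟩
        · rw [← hscale t ht]; exact smul_mem_smul_set hyS
        · rw [real_inner_smul_left]
          calc t * ⟪y, ξ⟫ ≤ t * 1 := by nlinarith
            _ = t := mul_one t
    rw [hset, Measure.addHaar_smul_of_nonneg volume ht.le, finrank_euclideanSpace_fin]
  -- the incidence set in the product space
  set A : Set ((EuclideanSpace ℝ (Fin n)) × ℝ) := {q | ⟪q.1, ξ⟫ ≤ q.2} with hA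
  have hAm : MeasurableSet A := by
    have : IsClosed A :=
      isClosed_le (hcont.comp continuous_fst) continuous_snd
    exact this.measurableSet
  have hGm : Measurable fun q : (EuclideanSpace ℝ (Fin n)) × ℝ =>
      ENNReal.ofReal (Real.exp (-q.2)) := by
    exact (ENNReal.measurable_ofReal.comp
      ((Real.continuous_exp.comp continuous_neg).measurable.comp measurable_snd))
  calc
    ∫⁻ p in S, ENNReal.ofReal (Real.exp (-⟪p, ξ⟫))
        = ∫⁻ p in S, ∫⁻ t, A.indicator
            (fun q : (EuclideanSpace ℝ (Fin n)) × ℝ => ENNReal.ofReal (Real.exp (-q.2)))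
            (p, t) := by
          refine lintegral_congr fun p => ?_
          rw [ofReal_exp_neg_eq_lintegral]
          rw [← lintegral_indicator measurableSet_Ici]
          refine lintegral_congr fun t => ?_
          simp only [Set.indicator_apply, mem_Ici, hA, mem_setOf_eq]
    _ = ∫⁻ t, ∫⁻ p in S, A.indicator
            (fun q : (EuclideanSpace ℝ (Fin n)) × ℝ => ENNReal.ofReal (Real.exp (-q.2)))
            (p, t) := by
          exact lintegral_lintegral_swap ((hGm.indicator hAm).aemeasurable)
    _ = ∫⁻ t, ENNReal.ofReal (Real.exp (-t)) * volume {p ∈ S | ⟪p, ξ⟫ ≤ t} := by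
          refine lintegral_congr fun t => ?_
          have : ∀ p : EuclideanSpace ℝ (Fin n), A.indicator
              (fun q : (EuclideanSpace ℝ (Fin n)) × ℝ => ENNReal.ofReal (Real.exp (-q.2)))
              (p, t) = {p : EuclideanSpace ℝ (Fin n) | ⟪p, ξ⟫ ≤ t}.indicator
              (fun _ => ENNReal.ofReal (Real.exp (-t))) p := by
            intro p
            simp only [Set.indicator_apply, hA, mem_setOf_eq]
          simp_rw [this]
          rw [lintegral_indicator_const (hlev t), Measure.restrict_apply (hlev t)]
          have hset : {p : EuclideanSpace ℝ (Fin n) | ⟪p, ξ⟫ ≤ t} ∩ S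
              = {p ∈ S | ⟪p, ξ⟫ ≤ t} := by
            ext p; simp only [mem_inter_iff, mem_setOf_eq]; tauto
          rw [hset]
    _ = ∫⁻ t in Ioi (0:ℝ), ENNReal.ofReal (Real.exp (-t)) * volume {p ∈ S | ⟪p, ξ⟫ ≤ t} := by
          rw [← lintegral_add_compl
            (fun t => ENNReal.ofReal (Real.exp (-t)) * volume {p ∈ S | ⟪p, ξ⟫ ≤ t})
            measurableSet_Ioi, compl_Ioi]
          have hzero : ∫⁻ t in Iic (0:ℝ),
              ENNReal.ofReal (Real.exp (-t)) * volume {p ∈ S | ⟪p, ξ⟫ ≤ t} = 0 := by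
            rw [← Measure.restrict_congr_set Iio_ae_eq_Iic]
            rw [setLIntegral_congr_fun_ae measurableSet_Iio
              (ae_of_all _ (fun t (ht : t < 0) => ?_)), lintegral_zero]
            have : {p ∈ S | ⟪p, ξ⟫ ≤ t} = ∅ := by
              ext p
              simp only [mem_setOf_eq, mem_empty_iff_false, iff_false]
              rintro ⟨hpS, hpf⟩
              exact absurd (hξ p hpS) (by linarith)
            rw [this, measure_empty, mul_zero]
          rw [hzero, add_zero]
    _ = (∫⁻ t in Ioi (0:ℝ), ENNReal.ofReal (Real.exp (-t) * t ^ n)) *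
          volume {p ∈ S | ⟪p, ξ⟫ ≤ 1} := by
          rw [← lintegral_mul_const _ (by fun_prop)]
          refine setLIntegral_congr_fun_ae measurableSet_Ioi (ae_of_all _ fun t ht => ?_)
          rw [hsect t ht, ENNReal.ofReal_mul (Real.exp_pos _).le, ← mul_assoc]

/-- Coercivity: interior points of the dual cone pair positively with the cone. -/
lemma coercive_of_mem_interior_dual {C : Set (EuclideanSpace ℝ (Fin n))}
    {ξ : EuclideanSpace ℝ (Fin n)}
    (hξ : ξ ∈ interior {y : EuclideanSpace ℝ (Fin n) | ∀ p ∈ C, 0 ≤ ⟪y, p⟫}) :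
    ∃ ε > 0, ∀ p ∈ C, ε * ‖p‖ ≤ ⟪p, ξ⟫ := by
  rw [mem_interior_iff_mem_nhds, Metric.mem_nhds_iff] at hξ
  obtain ⟨ε, hε, hball⟩ := hξ
  refine ⟨ε / 2, by positivity, fun p hp => ?_⟩
  rcases eq_or_ne p 0 with rfl | hp0
  · simp
  · have hpn : (0:ℝ) < ‖p‖ := norm_pos_iff.2 hp0
    set y : EuclideanSpace ℝ (Fin n) := ξ - (ε / (2 * ‖p‖)) • p with hy
    have hyb : y ∈ Metric.ball ξ ε := by
      rw [Metric.mem_ball, dist_eq_norm, hy]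
      have : ξ - (ε / (2 * ‖p‖)) • p - ξ = -((ε / (2 * ‖p‖)) • p) := by abel
      rw [this, norm_neg, norm_smul, Real.norm_eq_abs,
        abs_of_pos (by positivity : (0:ℝ) < ε / (2 * ‖p‖))]
      rw [div_mul_eq_mul_div, mul_comm]
      rw [div_lt_iff₀ (by positivity)]
      nlinarith
    have h0 : 0 ≤ ⟪y, p⟫ := hball hyb p hp
    rw [hy, inner_sub_left, real_inner_smul_left, real_inner_self_eq_norm_sq] at h0
    have : ε / (2 * ‖p‖) * ‖p‖ ^ 2 = ε / 2 * ‖p‖ := by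
      field_simp
    rw [this] at h0
    rw [real_inner_comm]
    linarith

/-- Finiteness of truncated-cone volume. -/
lemma vol_trunc_lt_top {S : Set (EuclideanSpace ℝ (Fin n))} {ξ : EuclideanSpace ℝ (Fin n)}
    {ε : ℝ} (hε : 0 < ε) (hco : ∀ p ∈ S, ε * ‖p‖ ≤ ⟪p, ξ⟫) :
    volume {p ∈ S | ⟪p, ξ⟫ ≤ 1} < ⊤ := by
  have hsub : {p ∈ S | ⟪p, ξ⟫ ≤ 1} ⊆ Metric.closedBall 0 (1/ε) := by
    rintro p ⟨hpS, hp1⟩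
    have := hco p hpS
    rw [Metric.mem_closedBall, dist_zero_right]
    rw [le_div_iff₀ hε]
    nlinarith
  exact lt_of_le_of_lt (measure_mono hsub) measure_closedBall_lt_top

/-- Positivity of truncated-cone volume for a cone with nonempty interior. -/
lemma vol_trunc_pos {S : Set (EuclideanSpace ℝ (Fin n))}
    (hscale : ∀ t : ℝ, 0 < t → t • S = S) (hint : (interior S).Nonempty)
    (ξ : EuclideanSpace ℝ (Fin n)) :
    0 < volume {p ∈ S | ⟪p, ξ⟫ ≤ 1} := by
  obtain ⟨x, hx⟩ := hint
  rw [mem_interior_iff_mem_nhds, Metric.mem_nhds_iff] at hx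
  obtain ⟨r, hr, hball⟩ := hx
  set B : ℝ := ⟪x, ξ⟫ + r * ‖ξ‖ with hB
  set t : ℝ := (1 + |B|)⁻¹ with ht
  have htpos : 0 < t := by positivity
  have hsub : Metric.ball (t • x) (t * r) ⊆ {p ∈ S | ⟪p, ξ⟫ ≤ 1} := by
    intro p hp
    rw [Metric.mem_ball] at hp
    constructor
    · have hmem : t⁻¹ • p ∈ Metric.ball x r := by
        rw [Metric.mem_ball]
        have : dist (t⁻¹ • p) x = t⁻¹ * dist p (t • x) := by
          rw [dist_eq_norm, dist_eq_norm]
          have : t⁻¹ • p - x = t⁻¹ • (p - t • x) := by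
            rw [smul_sub, smul_smul, inv_mul_cancel₀ htpos.ne', one_smul]
          rw [this, norm_smul, Real.norm_eq_abs, abs_of_pos (by positivity)]
        rw [this]
        calc t⁻¹ * dist p (t • x) < t⁻¹ * (t * r) := by
              exact mul_lt_mul_of_pos_left hp (by positivity)
          _ = r := by field_simp
      have : p = t • (t⁻¹ • p) := by rw [smul_smul, mul_inv_cancel₀ htpos.ne', one_smul]
      rw [this, ← hscale t htpos]
      exact smul_mem_smul_set (hball hmem)
    · have h1 : ⟪p - t • x, ξ⟫ ≤ ‖p - t • x‖ * ‖ξ‖ := real_inner_le_norm _ _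
      have h2 : ‖p - t • x‖ ≤ t * r := by
        rw [← dist_eq_norm]; exact hp.le
      have h3 : ⟪p, ξ⟫ = t * ⟪x, ξ⟫ + ⟪p - t • x, ξ⟫ := by
        rw [inner_sub_left, real_inner_smul_left]; ring
      have h4 : ‖p - t • x‖ * ‖ξ‖ ≤ t * r * ‖ξ‖ := by
        apply mul_le_mul_of_nonneg_right h2 (norm_nonneg _)
      have h5 : ⟪p, ξ⟫ ≤ t * B := by
        rw [h3, hB]; nlinarith
      have h6 : t * B ≤ t * |B| := by
        apply mul_le_mul_of_nonneg_left (le_abs_self B) htpos.le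
      have h7 : t * |B| ≤ 1 := by
        rw [ht, inv_mul_le_iff₀ (by positivity)]
        linarith [abs_nonneg B]
      linarith
  calc (0:ℝ≥0∞) < volume (Metric.ball (t • x) (t * r)) :=
        Metric.measure_ball_pos volume _ (by positivity)
    _ ≤ volume {p ∈ S | ⟪p, ξ⟫ ≤ 1} := measure_mono hsub

/-- The Gamma-type constant is positive and finite. -/
lemma gamma_const_pos_lt_top (n : ℕ) :
    0 < ∫⁻ t in Ioi (0:ℝ), ENNReal.ofReal (Real.exp (-t) * t ^ n) ∧
    (∫⁻ t in Ioi (0:ℝ), ENNReal.ofReal (Real.exp (-t) * t ^ n)) < ⊤ := by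
  constructor
  · have h1 : ENNReal.ofReal (Real.exp (-2)) * volume (Ioc (1:ℝ) 2) ≤
        ∫⁻ t in Ioc (1:ℝ) 2, ENNReal.ofReal (Real.exp (-t) * t ^ n) := by
      rw [← setLIntegral_const]
      refine setLIntegral_mono' measurableSet_Ioc fun t ht => ?_
      apply ENNReal.ofReal_le_ofReal
      have h1t : (1:ℝ) ≤ t := ht.1.le
      have htn : (1:ℝ) ≤ t ^ n := one_le_pow₀ h1t
      have : Real.exp (-2) ≤ Real.exp (-t) := Real.exp_le_exp.2 (by linarith [ht.2])
      nlinarith [Real.exp_pos (-t)]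
    have h2 : (0:ℝ≥0∞) < ENNReal.ofReal (Real.exp (-2)) * volume (Ioc (1:ℝ) 2) := by
      rw [Real.volume_Ioc]
      apply ENNReal.mul_pos
      · simp [Real.exp_pos]
      · simp [ENNReal.ofReal_pos]
    calc (0:ℝ≥0∞) < ENNReal.ofReal (Real.exp (-2)) * volume (Ioc (1:ℝ) 2) := h2
      _ ≤ ∫⁻ t in Ioc (1:ℝ) 2, ENNReal.ofReal (Real.exp (-t) * t ^ n) := h1
      _ ≤ ∫⁻ t in Ioi (0:ℝ), ENNReal.ofReal (Real.exp (-t) * t ^ n) := by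
          apply lintegral_mono_set
          intro t ht
          exact lt_trans zero_lt_one ht.1
  · have hint : IntegrableOn (fun t : ℝ => Real.exp (-t) * t ^ n) (Ioi 0) := by
      have := Real.GammaIntegral_convergent (s := n + 1) (by positivity)
      apply this.congr_fun ?_ measurableSet_Ioi
      intro t ht
      rw [add_sub_cancel_right]
      simp [Real.rpow_natCast]
    exact hint.lintegral_lt_top.trans_le le_top

/-- Hölder inequality for the Laplace transform of a measurable set. -/
lemma lap_holder (S : Set (EuclideanSpace ℝ (Fin n))) (ξ₁ ξ₂ : EuclideanSpace ℝ (Fin n))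
    {a b : ℝ} (ha : 0 < a) (hb : 0 < b) (hab : a + b = 1) :
    (∫⁻ p in S, ENNReal.ofReal (Real.exp (-⟪p, a • ξ₁ + b • ξ₂⟫))) ≤
      (∫⁻ p in S, ENNReal.ofReal (Real.exp (-⟪p, ξ₁⟫))) ^ a *
      (∫⁻ p in S, ENNReal.ofReal (Real.exp (-⟪p, ξ₂⟫))) ^ b := by
  have hpq : (1/a).HolderConjugate (1/b) := by
    simpa [one_div] using Real.holderConjugate_one_div ha hb hab
  set f : EuclideanSpace ℝ (Fin n) → ℝ≥0∞ :=
    fun p => ENNReal.ofReal (Real.exp (-⟪p, ξ₁⟫)) ^ a with hf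
  set g : EuclideanSpace ℝ (Fin n) → ℝ≥0∞ :=
    fun p => ENNReal.ofReal (Real.exp (-⟪p, ξ₂⟫)) ^ b with hg
  have hcm : ∀ ξ : EuclideanSpace ℝ (Fin n), {c : ℝ} → Measurable
      (fun p : EuclideanSpace ℝ (Fin n) => ENNReal.ofReal (Real.exp (-⟪p, ξ⟫)) ^ c) := by
    intro ξ c
    apply Measurable.pow_const
    apply ENNReal.measurable_ofReal.comp
    exact (Real.continuous_exp.comp (continuous_id.inner continuous_const).neg).measurable
  have hfm : AEMeasurable f (volume.restrict S) := (hcm ξ₁).aemeasurable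
  have hgm : AEMeasurable g (volume.restrict S) := (hcm ξ₂).aemeasurable
  have key := ENNReal.lintegral_mul_le_Lp_mul_Lq (volume.restrict S) hpq hfm hgm
  have hfg : ∀ p : EuclideanSpace ℝ (Fin n),
      (f * g) p = ENNReal.ofReal (Real.exp (-⟪p, a • ξ₁ + b • ξ₂⟫)) := by
    intro p
    simp only [Pi.mul_apply, hf, hg]
    rw [ENNReal.ofReal_rpow_of_pos (Real.exp_pos _), ENNReal.ofReal_rpow_of_pos (Real.exp_pos _),
      ← Real.exp_mul, ← Real.exp_mul, ← ENNReal.ofReal_mul (Real.exp_pos _).le,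
      ← Real.exp_add]
    congr 2
    rw [inner_add_right, real_inner_smul_right, real_inner_smul_right]
    ring
  have hfp : ∀ p : EuclideanSpace ℝ (Fin n), f p ^ (1/a) = ENNReal.ofReal (Real.exp (-⟪p, ξ₁⟫)) := by
    intro p
    rw [hf, ← ENNReal.rpow_mul, mul_one_div, div_self ha.ne', ENNReal.rpow_one]
  have hgp : ∀ p : EuclideanSpace ℝ (Fin n), g p ^ (1/b) = ENNReal.ofReal (Real.exp (-⟪p, ξ₂⟫)) := by
    intro p
    rw [hg, ← ENNReal.rpow_mul, mul_one_div, div_self hb.ne', ENNReal.rpow_one]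
  simp_rw [hfg, hfp, hgp] at key
  rw [one_div_one_div, one_div_one_div] at key
  exact key

/-- convexity of `log ∘ toReal` of the Laplace transform. -/
lemma convexOn_log_lap {Ξ : Set (EuclideanSpace ℝ (Fin n))} (hconv : Convex ℝ Ξ)
    (S : Set (EuclideanSpace ℝ (Fin n)))
    (hfin : ∀ ξ ∈ Ξ, (∫⁻ p in S, ENNReal.ofReal (Real.exp (-⟪p, ξ⟫))) ≠ ⊤)
    (hpos : ∀ ξ ∈ Ξ, (∫⁻ p in S, ENNReal.ofReal (Real.exp (-⟪p, ξ⟫))) ≠ 0) :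
    ConvexOn ℝ Ξ (fun ξ => Real.log (∫⁻ p in S, ENNReal.ofReal (Real.exp (-⟪p, ξ⟫))).toReal) := by
  set G : EuclideanSpace ℝ (Fin n) → ℝ≥0∞ :=
    fun ξ => ∫⁻ p in S, ENNReal.ofReal (Real.exp (-⟪p, ξ⟫)) with hG
  refine ⟨hconv, fun ξ₁ h₁ ξ₂ h₂ a b ha hb hab => ?_⟩
  rcases eq_or_lt_of_le ha with rfl | ha'
  · simp only [zero_smul, zero_add, smul_eq_mul, zero_mul] at *
    rw [show b = 1 by linarith, one_smul, one_mul]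
  rcases eq_or_lt_of_le hb with rfl | hb'
  · simp only [zero_smul, add_zero, smul_eq_mul, zero_mul] at *
    rw [show a = 1 by linarith, one_smul, one_mul]
  have hcomb : a • ξ₁ + b • ξ₂ ∈ Ξ := hconv h₁ h₂ ha hb hab
  have key := lap_holder S ξ₁ ξ₂ ha' hb' hab
  have hG1 : G ξ₁ ≠ ⊤ := hfin _ h₁
  have hG2 : G ξ₂ ≠ ⊤ := hfin _ h₂
  have hGc : G (a • ξ₁ + b • ξ₂) ≠ ⊤ := hfin _ hcomb
  have hrhs : (G ξ₁) ^ a * (G ξ₂) ^ b ≠ ⊤ := by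
    apply ENNReal.mul_ne_top
    · exact (ENNReal.rpow_lt_top_of_nonneg ha (hfin _ h₁)).ne
    · exact (ENNReal.rpow_lt_top_of_nonneg hb (hfin _ h₂)).ne
  have htr : (G (a • ξ₁ + b • ξ₂)).toReal ≤ ((G ξ₁) ^ a * (G ξ₂) ^ b).toReal :=
    ENNReal.toReal_mono hrhs key
  have h1pos : 0 < (G ξ₁).toReal := ENNReal.toReal_pos (hpos _ h₁) hG1
  have h2pos : 0 < (G ξ₂).toReal := ENNReal.toReal_pos (hpos _ h₂) hG2
  have hcpos : 0 < (G (a • ξ₁ + b • ξ₂)).toReal := ENNReal.toReal_pos (hpos _ hcomb) hGc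
  have hrw : ((G ξ₁) ^ a * (G ξ₂) ^ b).toReal = (G ξ₁).toReal ^ a * (G ξ₂).toReal ^ b := by
    rw [ENNReal.toReal_mul, ENNReal.toReal_rpow, ENNReal.toReal_rpow]
  calc Real.log (G (a • ξ₁ + b • ξ₂)).toReal
      ≤ Real.log ((G ξ₁).toReal ^ a * (G ξ₂).toReal ^ b) := by
        apply Real.log_le_log hcpos
        rw [← hrw]; exact htr
    _ = a * Real.log (G ξ₁).toReal + b * Real.log (G ξ₂).toReal := by
        rw [Real.log_mul (by positivity) (by positivity),
          Real.log_rpow h1pos, Real.log_rpow h2pos]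
    _ = a • Real.log (G ξ₁).toReal + b • Real.log (G ξ₂).toReal := by
        simp [smul_eq_mul]

/-- An affine hyperplane has Lebesgue measure zero. -/
lemma vol_hyperplane_zero {η : EuclideanSpace ℝ (Fin n)} (hη : η ≠ 0) (c : ℝ) :
    volume {p : EuclideanSpace ℝ (Fin n) | ⟪p, η⟫ = c} = 0 := by
  set K : Submodule ℝ (EuclideanSpace ℝ (Fin n)) :=
    LinearMap.ker (innerSL ℝ η).toLinearMap with hK
  have hKne : K ≠ ⊤ := by
    intro htop
    have : η ∈ K := htop ▸ Submodule.mem_top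
    rw [hK, LinearMap.mem_ker] at this
    simp only [ContinuousLinearMap.coe_coe, innerSL_apply_apply] at this
    exact hη (inner_self_eq_zero.1 this)
  set p₀ : EuclideanSpace ℝ (Fin n) := (c / ‖η‖ ^ 2) • η with hp₀
  have hp₀c : ⟪p₀, η⟫ = c := by
    rw [hp₀, real_inner_smul_left, real_inner_self_eq_norm_sq]
    field_simp [norm_ne_zero_iff.2 hη]
  have hset : {p : EuclideanSpace ℝ (Fin n) | ⟪p, η⟫ = c} = (· + -p₀) ⁻¹' (K : Set _) := by
    ext x
    simp only [mem_setOf_eq, mem_preimage, SetLike.mem_coe, hK, LinearMap.mem_ker,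
      ContinuousLinearMap.coe_coe, innerSL_apply_apply]
    rw [inner_add_right, inner_neg_right, real_inner_comm x η, real_inner_comm p₀ η] at *
    constructor
    · intro h; rw [real_inner_comm] at h; rw [real_inner_comm x η] at *; rw [h, hp₀c]; ring
    · intro h
      have := hp₀c
      nlinarith [h, this]
  rw [hset, measure_preimage_add_right]
  exact Measure.addHaar_submodule volume K hKne

/-- Strict midpoint inequality for the log-Laplace transform. -/
lemma lap_midpoint_strict {S : Set (EuclideanSpace ℝ (Fin n))} (hSm : MeasurableSet S)
    (hSpos : 0 < volume S) {ξ₁ ξ₂ : EuclideanSpace ℝ (Fin n)} (hne : ξ₁ ≠ ξ₂)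
    (hfin1 : (∫⁻ p in S, ENNReal.ofReal (Real.exp (-⟪p, ξ₁⟫))) ≠ ⊤)
    (hfin2 : (∫⁻ p in S, ENNReal.ofReal (Real.exp (-⟪p, ξ₂⟫))) ≠ ⊤)
    (hpos1 : (∫⁻ p in S, ENNReal.ofReal (Real.exp (-⟪p, ξ₁⟫))) ≠ 0)
    (hpos2 : (∫⁻ p in S, ENNReal.ofReal (Real.exp (-⟪p, ξ₂⟫))) ≠ 0)
    (hposm : (∫⁻ p in S, ENNReal.ofReal (Real.exp (-⟪p, (1/2:ℝ) • ξ₁ + (1/2:ℝ) • ξ₂⟫))) ≠ 0)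
    (hfinm : (∫⁻ p in S, ENNReal.ofReal (Real.exp (-⟪p, (1/2:ℝ) • ξ₁ + (1/2:ℝ) • ξ₂⟫))) ≠ ⊤) :
    Real.log (∫⁻ p in S, ENNReal.ofReal (Real.exp (-⟪p, (1/2:ℝ) • ξ₁ + (1/2:ℝ) • ξ₂⟫))).toReal
      < (Real.log (∫⁻ p in S, ENNReal.ofReal (Real.exp (-⟪p, ξ₁⟫))).toReal
        + Real.log (∫⁻ p in S, ENNReal.ofReal (Real.exp (-⟪p, ξ₂⟫))).toReal) / 2 := by
  set μ := volume.restrict S with hμ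
  set f₁ : EuclideanSpace ℝ (Fin n) → ℝ := fun p => Real.exp (-(⟪p, ξ₁⟫ / 2)) with hf₁
  set f₂ : EuclideanSpace ℝ (Fin n) → ℝ := fun p => Real.exp (-(⟪p, ξ₂⟫ / 2)) with hf₂
  have hc₁ : Continuous f₁ :=
    Real.continuous_exp.comp ((continuous_id.inner continuous_const).div_const 2).neg
  have hc₂ : Continuous f₂ :=
    Real.continuous_exp.comp ((continuous_id.inner continuous_const).div_const 2).neg
  have hsq₁ : ∀ p, f₁ p ^ 2 = Real.exp (-⟪p, ξ₁⟫) := by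
    intro p; rw [hf₁, sq, ← Real.exp_add]; congr 1; ring
  have hsq₂ : ∀ p, f₂ p ^ 2 = Real.exp (-⟪p, ξ₂⟫) := by
    intro p; rw [hf₂, sq, ← Real.exp_add]; congr 1; ring
  have hprod : ∀ p, f₁ p * f₂ p = Real.exp (-⟪p, (1/2:ℝ) • ξ₁ + (1/2:ℝ) • ξ₂⟫) := by
    intro p
    rw [hf₁, hf₂, ← Real.exp_add, inner_add_right, real_inner_smul_right, real_inner_smul_right]
    congr 1; ring
  -- membership in L²
  have hmem : ∀ (ξ : EuclideanSpace ℝ (Fin n)) (f : EuclideanSpace ℝ (Fin n) → ℝ),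
      Continuous f → (∀ p, f p ^ 2 = Real.exp (-⟪p, ξ⟫)) →
      (∫⁻ p in S, ENNReal.ofReal (Real.exp (-⟪p, ξ⟫))) ≠ ⊤ → MemLp f 2 μ := by
    intro ξ f hc hsq hfin
    rw [memLp_two_iff_integrable_sq hc.aestronglyMeasurable]
    constructor
    · exact (hc.pow 2).aestronglyMeasurable
    · rw [hasFiniteIntegral_iff_ofReal (ae_of_all _ fun p => sq_nonneg _)]
      simp_rw [hsq]
      exact hfin.lt_top
  have hmem₁ : MemLp f₁ 2 μ := hmem ξ₁ f₁ hc₁ hsq₁ hfin1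
  have hmem₂ : MemLp f₂ 2 μ := hmem ξ₂ f₂ hc₂ hsq₂ hfin2
  set F₁ : Lp ℝ 2 μ := hmem₁.toLp f₁ with hF₁
  set F₂ : Lp ℝ 2 μ := hmem₂.toLp f₂ with hF₂
  -- inner products and norms
  have hinner : ∀ (G₁ G₂ : Lp ℝ 2 μ) (g₁ g₂ : EuclideanSpace ℝ (Fin n) → ℝ),
      (⇑G₁ =ᵐ[μ] g₁) → (⇑G₂ =ᵐ[μ] g₂) → ⟪G₁, G₂⟫ = ∫ p, g₁ p * g₂ p ∂μ := by
    intro G₁ G₂ g₁ g₂ h₁ h₂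
    rw [MeasureTheory.L2.inner_def]
    apply integral_congr_ae
    filter_upwards [h₁, h₂] with p hp₁ hp₂
    rw [hp₁, hp₂, RCLike.inner_apply, starRingEnd_apply, star_trivial, mul_comm]
  have key₁₂ : ⟪F₁, F₂⟫ = (∫⁻ p in S,
      ENNReal.ofReal (Real.exp (-⟪p, (1/2:ℝ) • ξ₁ + (1/2:ℝ) • ξ₂⟫))).toReal := by
    rw [hinner F₁ F₂ f₁ f₂ (hmem₁.coeFn_toLp) (hmem₂.coeFn_toLp)]
    rw [integral_eq_lintegral_of_nonneg_ae
      (ae_of_all _ fun p => mul_nonneg (Real.exp_pos _).le (Real.exp_pos _).le)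
      ((hc₁.mul hc₂).aestronglyMeasurable)]
    congr 1
    apply lintegral_congr fun p => ?_
    rw [hprod p]
  have keynorm : ∀ (G : Lp ℝ 2 μ) (g : EuclideanSpace ℝ (Fin n) → ℝ) (ξ : EuclideanSpace ℝ (Fin n)),
      (⇑G =ᵐ[μ] g) → Continuous g → (∀ p, g p ^ 2 = Real.exp (-⟪p, ξ⟫)) →
      ‖G‖ = Real.sqrt (∫⁻ p in S, ENNReal.ofReal (Real.exp (-⟪p, ξ⟫))).toReal := by
    intro G g ξ hG hc hsq
    have h1 : ⟪G, G⟫ = (∫⁻ p in S, ENNReal.ofReal (Real.exp (-⟪p, ξ⟫))).toReal := by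
      rw [hinner G G g g hG hG]
      rw [integral_eq_lintegral_of_nonneg_ae (f := fun p => g p * g p)
        (ae_of_all _ fun p => mul_self_nonneg (g p))
        ((hc.mul hc).aestronglyMeasurable)]
      congr 1
      apply lintegral_congr fun p => ?_
      rw [← sq, hsq p]
    rw [← Real.sqrt_mul_self (norm_nonneg G), ← real_inner_self_eq_norm_mul_norm, h1]
  have hn₁ : ‖F₁‖ = Real.sqrt (∫⁻ p in S, ENNReal.ofReal (Real.exp (-⟪p, ξ₁⟫))).toReal :=
    keynorm F₁ f₁ ξ₁ hmem₁.coeFn_toLp hc₁ hsq₁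
  have hn₂ : ‖F₂‖ = Real.sqrt (∫⁻ p in S, ENNReal.ofReal (Real.exp (-⟪p, ξ₂⟫))).toReal :=
    keynorm F₂ f₂ ξ₂ hmem₂.coeFn_toLp hc₂ hsq₂
  have hA : 0 < (∫⁻ p in S, ENNReal.ofReal (Real.exp (-⟪p, ξ₁⟫))).toReal :=
    ENNReal.toReal_pos hpos1 hfin1
  have hB : 0 < (∫⁻ p in S, ENNReal.ofReal (Real.exp (-⟪p, ξ₂⟫))).toReal :=
    ENNReal.toReal_pos hpos2 hfin2
  have hF₁pos : 0 < ‖F₁‖ := by rw [hn₁]; positivity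
  have hF₂pos : 0 < ‖F₂‖ := by rw [hn₂]; positivity
  -- strict Cauchy–Schwarz
  have hstrict : ⟪F₁, F₂⟫ < ‖F₁‖ * ‖F₂‖ := by
    rw [inner_lt_norm_mul_iff_real]
    intro heq
    -- a.e. proportionality
    have hae : ∀ᵐ p ∂μ, ‖F₂‖ * f₁ p = ‖F₁‖ * f₂ p := by
      have h1 : ⇑(‖F₂‖ • F₁) =ᵐ[μ] fun p => ‖F₂‖ * f₁ p := by
        filter_upwards [Lp.coeFn_smul ‖F₂‖ F₁, hmem₁.coeFn_toLp] with p hp₁ hp₂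
        rw [hp₁]; simp [hF₁, hp₂]
      have h2 : ⇑(‖F₁‖ • F₂) =ᵐ[μ] fun p => ‖F₁‖ * f₂ p := by
        filter_upwards [Lp.coeFn_smul ‖F₁‖ F₂, hmem₂.coeFn_toLp] with p hp₁ hp₂
        rw [hp₁]; simp [hF₂, hp₂]
      have h3 : ⇑(‖F₂‖ • F₁) =ᵐ[μ] ⇑(‖F₁‖ • F₂) := by rw [heq]
      filter_upwards [h1, h2, h3] with p hp₁ hp₂ hp₃
      rw [← hp₁, ← hp₂, hp₃]
    -- derive that the inner product with η is a.e. constant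
    set η : EuclideanSpace ℝ (Fin n) := ξ₁ - ξ₂ with hη
    have hηne : η ≠ 0 := sub_ne_zero.2 hne
    set cst : ℝ := 2 * (Real.log ‖F₂‖ - Real.log ‖F₁‖) with hcst
    have hae2 : ∀ᵐ p ∂μ, ⟪p, η⟫ = cst := by
      filter_upwards [hae] with p hp
      have hln : Real.log (‖F₂‖ * f₁ p) = Real.log (‖F₁‖ * f₂ p) := by rw [hp]
      rw [Real.log_mul hF₂pos.ne' (Real.exp_pos _).ne',
        Real.log_mul hF₁pos.ne' (Real.exp_pos _).ne'] at hln
      simp only [Real.log_exp] at hln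
      rw [hη, inner_sub_right, hcst]
      linarith
    -- contradiction with positive volume
    have hnull : μ {p | ⟪p, η⟫ = cst}ᶜ = 0 := by
      rw [compl_setOf]
      rw [ae_iff] at hae2
      exact hae2
    have : volume S ≤ volume {p : EuclideanSpace ℝ (Fin n) | ⟪p, η⟫ = cst} := by
      have hμS : μ univ = volume S := by rw [hμ, Measure.restrict_apply_univ]
      have hsplit : μ univ ≤ μ {p | ⟪p, η⟫ = cst} + μ {p | ⟪p, η⟫ = cst}ᶜ := by
        rw [← union_compl_self {p | ⟪p, η⟫ = cst}] ; exact measure_union_le _ _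
      rw [hnull, add_zero] at hsplit
      rw [← hμS]
      exact hsplit.trans (Measure.restrict_apply_le _ _)
    rw [vol_hyperplane_zero hηne cst] at this
    exact absurd (le_antisymm this (by simp)) hSpos.ne'
  -- conclude
  rw [key₁₂, hn₁, hn₂] at hstrict
  have hMpos : 0 < (∫⁻ p in S,
      ENNReal.ofReal (Real.exp (-⟪p, (1/2:ℝ) • ξ₁ + (1/2:ℝ) • ξ₂⟫))).toReal := by
    exact ENNReal.toReal_pos hposm hfinm
  calc Real.log (∫⁻ p in S,
        ENNReal.ofReal (Real.exp (-⟪p, (1/2:ℝ) • ξ₁ + (1/2:ℝ) • ξ₂⟫))).toReal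
      < Real.log (Real.sqrt (∫⁻ p in S, ENNReal.ofReal (Real.exp (-⟪p, ξ₁⟫))).toReal *
          Real.sqrt (∫⁻ p in S, ENNReal.ofReal (Real.exp (-⟪p, ξ₂⟫))).toReal) :=
        Real.log_lt_log hMpos hstrict
    _ = (Real.log (∫⁻ p in S, ENNReal.ofReal (Real.exp (-⟪p, ξ₁⟫))).toReal
        + Real.log (∫⁻ p in S, ENNReal.ofReal (Real.exp (-⟪p, ξ₂⟫))).toReal) / 2 := by
        rw [Real.log_mul (by positivity) (by positivity), Real.log_sqrt hA.le,
          Real.log_sqrt hB.le]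
        ring

end AuxiliaryLemmas

/-- if `C = C₁ + ⋯ + C_k` is a Minkowski sum of convex polyhedral cones
`C_α ⊆ C`, each with nonempty interior, and `q` is interior to `C`, then
`W(ξ') = Σ_α log Vol_{m+1}({p ∈ C_α : ⟪p,ξ'⟫ ≤ 1})` is strictly convex on
`Ξ_q = {ξ' ∈ int C* : ⟪q,ξ'⟫ = 1}`. -/
theorem stmt6 (m d k : ℕ) (ℓ : Fin d → EuclideanSpace ℝ (Fin (m + 1)))
    (C : Set (EuclideanSpace ℝ (Fin (m + 1))))
    (hC : C = {p | ∀ a, 0 ≤ ⟪p, ℓ a⟫})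
    (hint : (interior C).Nonempty)
    (Cα : Fin k → Set (EuclideanSpace ℝ (Fin (m + 1))))
    (d' : Fin k → ℕ) (L : (α : Fin k) → Fin (d' α) → EuclideanSpace ℝ (Fin (m + 1)))
    (hCα : ∀ α, Cα α = {p | ∀ b, 0 ≤ ⟪p, L α b⟫})
    (hsub : ∀ α, Cα α ⊆ C)
    (hintα : ∀ α, (interior (Cα α)).Nonempty)
    (hsum : C = ∑ α, Cα α)
    (q : EuclideanSpace ℝ (Fin (m + 1))) (hq : q ∈ interior C) :
    StrictConvexOn ℝ
      ({ξ' | ξ' ∈ interior {y : EuclideanSpace ℝ (Fin (m + 1)) | ∀ p ∈ C, 0 ≤ ⟪y, p⟫} ∧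
          ⟪q, ξ'⟫ = 1})
      (fun ξ' => ∑ α, Real.log (volume {p ∈ Cα α | ⟪p, ξ'⟫ ≤ 1}).toReal) := by
  set D : Set (EuclideanSpace ℝ (Fin (m+1))) := {y | ∀ p ∈ C, 0 ≤ ⟪y, p⟫} with hD
  set Ξ : Set (EuclideanSpace ℝ (Fin (m+1))) := {ξ' | ξ' ∈ interior D ∧ ⟪q, ξ'⟫ = 1} with hΞ
  -- convexity of the domain
  have hDconv : Convex ℝ D := by
    intro y₁ h₁ y₂ h₂ a b ha hb hab
    intro p hp
    rw [inner_add_left, real_inner_smul_left, real_inner_smul_left]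
    exact add_nonneg (mul_nonneg ha (h₁ p hp)) (mul_nonneg hb (h₂ p hp))
  have hΞconv : Convex ℝ Ξ := by
    have h1 : Ξ = interior D ∩ {ξ : EuclideanSpace ℝ (Fin (m+1)) | ⟪q, ξ⟫ = 1} := by
      ext ξ; simp [hΞ, mem_inter_iff, mem_setOf_eq]
    rw [h1]
    refine (hDconv.interior).inter ?_
    intro y₁ h₁ y₂ h₂ a b ha hb hab
    simp only [mem_setOf_eq] at *
    rw [inner_add_right, real_inner_smul_right, real_inner_smul_right, h₁, h₂]
    linarith
  -- basic facts about each cone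
  have hscale : ∀ α, ∀ t : ℝ, 0 < t → t • Cα α = Cα α := by
    intro α t ht
    have hmem : ∀ s : ℝ, 0 < s → ∀ x ∈ Cα α, s • x ∈ Cα α := by
      intro s hs x hx
      rw [hCα] at hx ⊢
      intro b
      rw [real_inner_smul_left]
      exact mul_nonneg hs.le (hx b)
    apply Set.Subset.antisymm
    · rintro _ ⟨y, hy, rfl⟩; exact hmem t ht y hy
    · intro x hx
      exact ⟨t⁻¹ • x, hmem t⁻¹ (inv_pos.2 ht) x hx, smul_inv_smul₀ ht.ne' x⟩
  have hSm : ∀ α, MeasurableSet (Cα α) := by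
    intro α
    rw [hCα]
    have : IsClosed {p : EuclideanSpace ℝ (Fin (m+1)) | ∀ b, 0 ≤ ⟪p, L α b⟫} := by
      have : {p : EuclideanSpace ℝ (Fin (m+1)) | ∀ b, 0 ≤ ⟪p, L α b⟫}
          = ⋂ b, {p : EuclideanSpace ℝ (Fin (m+1)) | 0 ≤ ⟪p, L α b⟫} := by
        ext p; simp [mem_iInter]
      rw [this]
      exact isClosed_iInter fun b =>
        isClosed_le continuous_const (continuous_id.inner continuous_const)
    exact this.measurableSet
  have hSpos : ∀ α, 0 < volume (Cα α) := fun α =>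
    Measure.measure_pos_of_nonempty_interior _ (hintα α)
  -- the Gamma constant
  set c : ℝ≥0∞ := ∫⁻ t in Ioi (0:ℝ), ENNReal.ofReal (Real.exp (-t) * t ^ (m+1)) with hc
  obtain ⟨hcpos, hcfin⟩ := gamma_const_pos_lt_top (m+1)
  -- the Laplace transforms
  set G : Fin k → EuclideanSpace ℝ (Fin (m+1)) → ℝ≥0∞ :=
    fun α ξ => ∫⁻ p in Cα α, ENNReal.ofReal (Real.exp (-⟪p, ξ⟫)) with hG
  have hid : ∀ α, ∀ ξ ∈ Ξ, G α ξ = c * volume {p ∈ Cα α | ⟪p, ξ⟫ ≤ 1} := by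
    intro α ξ hξ
    apply lap_eq_const_mul_vol (Cα α) (hSm α) (hscale α) ξ
    intro p hp
    have hξD : ξ ∈ D := interior_subset hξ.1
    rw [real_inner_comm]
    exact hξD p (hsub α hp)
  have hvolfin : ∀ α, ∀ ξ ∈ Ξ, volume {p ∈ Cα α | ⟪p, ξ⟫ ≤ 1} < ⊤ := by
    intro α ξ hξ
    obtain ⟨ε, hε, hco⟩ := coercive_of_mem_interior_dual hξ.1
    exact vol_trunc_lt_top hε fun p hp => hco p (hsub α hp)
  have hvolpos : ∀ α, ∀ ξ : EuclideanSpace ℝ (Fin (m+1)), 0 < volume {p ∈ Cα α | ⟪p, ξ⟫ ≤ 1} :=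
    fun α ξ => vol_trunc_pos (hscale α) (hintα α) ξ
  have hGfin : ∀ α, ∀ ξ ∈ Ξ, G α ξ ≠ ⊤ := by
    intro α ξ hξ
    rw [hid α ξ hξ]
    exact ENNReal.mul_ne_top hcfin.ne (hvolfin α ξ hξ).ne
  have hGpos : ∀ α, ∀ ξ ∈ Ξ, G α ξ ≠ 0 := by
    intro α ξ hξ
    rw [hid α ξ hξ]
    exact (ENNReal.mul_pos hcpos.ne' (hvolpos α ξ).ne').ne'
  -- each summand is strictly convex
  have hstrict : ∀ α, StrictConvexOn ℝ Ξ
      (fun ξ => Real.log (volume {p ∈ Cα α | ⟪p, ξ⟫ ≤ 1}).toReal) := by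
    intro α
    have hψconv : ConvexOn ℝ Ξ (fun ξ => Real.log (G α ξ).toReal) :=
      convexOn_log_lap hΞconv (Cα α) (hGfin α) (hGpos α)
    have hψstrict : StrictConvexOn ℝ Ξ (fun ξ => Real.log (G α ξ).toReal) := by
      apply strictConvexOn_of_midpoint hψconv
      intro x hx y hy hxy
      have hmid : (1/2:ℝ) • x + (1/2:ℝ) • y ∈ Ξ :=
        hΞconv hx hy (by norm_num) (by norm_num) (by norm_num)
      exact lap_midpoint_strict (hSm α) (hSpos α) hxy (hGfin α x hx) (hGfin α y hy)
        (hGpos α x hx) (hGpos α y hy) (hGpos α _ hmid) (hGfin α _ hmid)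
    -- transfer along the identity
    have heq : ∀ ξ ∈ Ξ, Real.log (volume {p ∈ Cα α | ⟪p, ξ⟫ ≤ 1}).toReal
        = Real.log (G α ξ).toReal - Real.log c.toReal := by
      intro ξ hξ
      rw [hid α ξ hξ, ENNReal.toReal_mul,
        Real.log_mul (ENNReal.toReal_pos hcpos.ne' hcfin.ne).ne'
          (ENNReal.toReal_pos (hvolpos α ξ).ne' (hvolfin α ξ hξ).ne).ne']
      ring
    refine ⟨hΞconv, fun x hx y hy hxy a b ha hb hab => ?_⟩
    have hcomb : a • x + b • y ∈ Ξ := hΞconv hx hy ha.le hb.le hab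
    simp only [smul_eq_mul]
    rw [heq x hx, heq y hy, heq _ hcomb]
    have := hψstrict.2 hx hy hxy ha hb hab
    simp only [smul_eq_mul] at this
    have hc' : a * Real.log c.toReal + b * Real.log c.toReal = Real.log c.toReal := by
      rw [← add_mul, hab, one_mul]
    nlinarith [this, hc']
  -- k is positive
  rcases Nat.eq_zero_or_pos k with rfl | hk
  · exfalso
    simp only [Finset.univ_eq_empty, Finset.sum_empty] at hsum
    have : Nontrivial (EuclideanSpace ℝ (Fin (m+1))) :=
      Module.nontrivial_of_finrank_pos (R := ℝ) (by rw [finrank_euclideanSpace_fin]; omega)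
    have : 0 < volume C := Measure.measure_pos_of_nonempty_interior _ hint
    rw [hsum, ← Set.singleton_zero, measure_singleton] at this
    exact lt_irrefl _ this
  -- sum of strictly convex functions
  obtain ⟨k', rfl⟩ : ∃ k', k = k' + 1 := ⟨k - 1, by omega⟩
  have hsum_convex : ∀ (s : Finset (Fin (k'+1))),
      ConvexOn ℝ Ξ (fun ξ => ∑ α ∈ s, Real.log (volume {p ∈ Cα α | ⟪p, ξ⟫ ≤ 1}).toReal) := by
    intro s
    induction s using Finset.induction_on with
    | empty => simpa using convexOn_const 0 hΞconv
    | @insert α s' hα ih =>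
      have := ((hstrict α).convexOn).add ih
      refine (congrArg (ConvexOn ℝ Ξ) ?_).mpr this
      ext ξ
      rw [Finset.sum_insert hα]
      rfl
  have : StrictConvexOn ℝ Ξ (fun ξ =>
      Real.log (volume {p ∈ Cα 0 | ⟪p, ξ⟫ ≤ 1}).toReal +
      ∑ α : Fin k', Real.log (volume {p ∈ Cα α.succ | ⟪p, ξ⟫ ≤ 1}).toReal) := by
    have h2 : ConvexOn ℝ Ξ (fun ξ =>
        ∑ α : Fin k', Real.log (volume {p ∈ Cα α.succ | ⟪p, ξ⟫ ≤ 1}).toReal) := by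
      have := hsum_convex (Finset.univ.image Fin.succ)
      convert this using 1
      ext ξ
      rw [Finset.sum_image (by intro x _ y _ h; exact Fin.succ_injective _ h)]
    exact (hstrict 0).add_convexOn h2
  convert this using 1
  ext ξ
  rw [Fin.sum_univ_succ]
end
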